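/- arXiv:1612.01111 — 14 statements merged into one kernel-verified Lean document; each statement's English description precedes it below -/
import Mathlib

section
/- Let f : ℝ → ℝ be smooth, let σ : ℝ → ℝ be smooth, nowhere zero, and satisfy σ' = f·σ, and let W : ℝ → ℝ be smooth with W' = σ. Let a ∈ ℝ. If a smooth function u : ℝ × ℝ → ℝ satisfies the nonlinear evolution equation u_t = u_xxx + 3 f(u) u_x u_xx + (f'(u) + f(u)²) u_x³ + a (f(u) u_x² + u_xx) at every point (t,x), then the function w(t,x) = W(u(t,x)) satisfies the linear equation w_t = w_xxx + a w_xx at every point (t,x). -/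
/-- Partial derivative in the first (time) variable. -/
noncomputable def pt (u : ℝ → ℝ → ℝ) : ℝ → ℝ → ℝ := fun t x => deriv (fun s => u s x) t

/-- Partial derivative in the second (space) variable. -/
noncomputable def px (u : ℝ → ℝ → ℝ) : ℝ → ℝ → ℝ := fun t x => deriv (fun y => u t y) x

open scoped ContDiff

lemma comp_deriv (W v : ℝ → ℝ) (hW : ContDiff ℝ ∞ W) (hv : ContDiff ℝ ∞ v) (x : ℝ) :
    deriv (fun y => W (v y)) x = deriv W (v x) * deriv v x := by
  rw [show (fun y => W (v y)) = W ∘ v from rfl]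
  exact deriv_comp x (hW.differentiable (by simp) (v x)) (hv.differentiable (by simp) x)

lemma key2 (f σ W v : ℝ → ℝ)
    (hf : ContDiff ℝ ∞ f) (hσ : ContDiff ℝ ∞ σ)
    (hσ' : ∀ s, deriv σ s = f s * σ s)
    (hW : ContDiff ℝ ∞ W) (hW' : ∀ s, deriv W s = σ s)
    (hv : ContDiff ℝ ∞ v) (x : ℝ) :
    deriv (deriv (fun y => W (v y))) x
      = σ (v x) * (f (v x) * (deriv v x) ^ 2 + deriv (deriv v) x) := by
  have hv' : ContDiff ℝ ∞ (deriv v) := (contDiff_infty_iff_deriv.mp hv).2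
  have h1 : deriv (fun y => W (v y)) = fun y => σ (v y) * deriv v y := by
    funext y; rw [comp_deriv W v hW hv, hW']
  have dσv : DifferentiableAt ℝ (fun y => σ (v y)) x :=
    ((hσ.comp hv).differentiable (by simp) x)
  rw [h1, deriv_fun_mul dσv (hv'.differentiable (by simp) x)]
  rw [comp_deriv σ v hσ hv, hσ']
  ring

lemma key3 (f σ W v : ℝ → ℝ)
    (hf : ContDiff ℝ ∞ f) (hσ : ContDiff ℝ ∞ σ)
    (hσ' : ∀ s, deriv σ s = f s * σ s)
    (hW : ContDiff ℝ ∞ W) (hW' : ∀ s, deriv W s = σ s)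
    (hv : ContDiff ℝ ∞ v) (x : ℝ) :
    deriv (deriv (deriv (fun y => W (v y)))) x
      = σ (v x) * (deriv (deriv (deriv v)) x
          + 3 * f (v x) * deriv v x * deriv (deriv v) x
          + (deriv f (v x) + (f (v x)) ^ 2) * (deriv v x) ^ 3) := by
  have hv' : ContDiff ℝ ∞ (deriv v) := (contDiff_infty_iff_deriv.mp hv).2
  have hv'' : ContDiff ℝ ∞ (deriv (deriv v)) := (contDiff_infty_iff_deriv.mp hv').2
  have h2 : deriv (deriv (fun y => W (v y)))
      = fun y => σ (v y) * (f (v y) * (deriv v y) ^ 2 + deriv (deriv v) y) := by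
    funext y; exact key2 f σ W v hf hσ hσ' hW hW' hv y
  have hsq : (fun y => (deriv v y) ^ 2) = fun y => deriv v y * deriv v y := by
    funext y; ring
  have dσv : DifferentiableAt ℝ (fun y => σ (v y)) x :=
    ((hσ.comp hv).differentiable (by simp) x)
  have dfv : DifferentiableAt ℝ (fun y => f (v y)) x :=
    ((hf.comp hv).differentiable (by simp) x)
  have dv' : DifferentiableAt ℝ (deriv v) x := hv'.differentiable (by simp) x
  have dv'' : DifferentiableAt ℝ (deriv (deriv v)) x := hv''.differentiable (by simp) x
  have dsq : DifferentiableAt ℝ (fun y => (deriv v y) ^ 2) x := by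
    rw [hsq]; exact dv'.mul dv'
  rw [h2, deriv_fun_mul dσv ((dfv.fun_mul dsq).fun_add dv''),
    deriv_fun_add (dfv.fun_mul dsq) dv'', deriv_fun_mul dfv dsq,
    comp_deriv σ v hσ hv, comp_deriv f v hf hv, hσ', hsq, deriv_fun_mul dv' dv']
  ring

/-- Linearization of the class
`u_t = u_xxx + 3 f(u) u_x u_xx + (f'(u) + f(u)²) u_x³ + a (f(u) u_x² + u_xx)`
by the change of dependent variable `w = W(u)` with `W' = σ`, `σ' = f σ`. -/
theorem stmt_0 (f σ W : ℝ → ℝ) (a : ℝ)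
    (hf : ContDiff ℝ (⊤ : ℕ∞) f)
    (hσ : ContDiff ℝ (⊤ : ℕ∞) σ) (hσ0 : ∀ s, σ s ≠ 0)
    (hσ' : ∀ s, deriv σ s = f s * σ s)
    (hW : ContDiff ℝ (⊤ : ℕ∞) W) (hW' : ∀ s, deriv W s = σ s)
    (u : ℝ → ℝ → ℝ) (hu : ContDiff ℝ (⊤ : ℕ∞) (Function.uncurry u))
    (heq : ∀ t x, pt u t x =
      px (px (px u)) t x
      + 3 * f (u t x) * px u t x * px (px u) t x
      + (deriv f (u t x) + (f (u t x)) ^ 2) * (px u t x) ^ 3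
      + a * (f (u t x) * (px u t x) ^ 2 + px (px u) t x)) :
    ∀ t x, pt (fun t x => W (u t x)) t x =
      px (px (px (fun t x => W (u t x)))) t x
      + a * px (px (fun t x => W (u t x))) t x := by
  intro t x
  have hu' : ContDiff ℝ ∞ (Function.uncurry u) := hu.of_le (by simp)
  have hf' : ContDiff ℝ ∞ f := hf.of_le (by simp)
  have hσ2 : ContDiff ℝ ∞ σ := hσ.of_le (by simp)
  have hW2 : ContDiff ℝ ∞ W := hW.of_le (by simp)
  have hv : ContDiff ℝ ∞ (fun y => u t y) := hu'.comp (contDiff_const.prodMk contDiff_id)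
  have hc : ContDiff ℝ ∞ (fun s => u s x) := hu'.comp (contDiff_id.prodMk contDiff_const)
  have hpt : pt (fun t x => W (u t x)) t x = σ (u t x) * pt u t x := by
    show deriv (fun s => W (u s x)) t = _
    rw [comp_deriv W (fun s => u s x) hW2 hc, hW']
    rfl
  have h3 : px (px (px (fun t x => W (u t x)))) t x
      = deriv (deriv (deriv (fun y => W (u t y)))) x := rfl
  have h2 : px (px (fun t x => W (u t x))) t x
      = deriv (deriv (fun y => W (u t y))) x := rfl
  have e1 : deriv (fun y => u t y) x = px u t x := rfl
  have e2 : deriv (deriv (fun y => u t y)) x = px (px u) t x := rfl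
  have e3 : deriv (deriv (deriv (fun y => u t y))) x = px (px (px u)) t x := rfl
  rw [hpt, h3, h2, key3 f σ W _ hf' hσ2 hσ' hW2 hW' hv x,
    key2 f σ W _ hf' hσ2 hσ' hW2 hW' hv x, e1, e2, e3, heq t x]
  ring
end

section
/- Let f : ℝ → ℝ be smooth, let a ∈ ℝ, and let Φ : ℝ → ℝ be smooth with Φ'(s) ≠ 0 for all s and satisfying Φ''(s) + f(Φ(s))·Φ'(s)² = 0 for all s. If a smooth function w : ℝ × ℝ → ℝ satisfies the linear equation w_t = w_xxx + a w_xx at every point, then u(t,x) = Φ(w(t,x)) satisfies the nonlinear equation u_t = u_xxx + 3 f(u) u_x u_xx + (f'(u) + f(u)²) u_x³ + a (f(u) u_x² + u_xx) at every point. -/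
/-- Inverse direction of the linearization: substituting `u = Φ(w)`
with `Φ'' + f(Φ) Φ'² = 0` into the linear equation `w_t = w_xxx + a w_xx` yields
the nonlinear equation of the linearizable class. -/
theorem stmt_1 (f : ℝ → ℝ) (a : ℝ) (Φ : ℝ → ℝ)
    (hf : ContDiff ℝ (⊤ : ℕ∞) f)
    (hΦ : ContDiff ℝ (⊤ : ℕ∞) Φ) (hΦ' : ∀ s, deriv Φ s ≠ 0)
    (hΦeq : ∀ s, deriv (deriv Φ) s + f (Φ s) * (deriv Φ s) ^ 2 = 0)
    (w : ℝ → ℝ → ℝ) (hw : ContDiff ℝ (⊤ : ℕ∞) (Function.uncurry w))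
    (heq : ∀ t x, pt w t x = px (px (px w)) t x + a * px (px w) t x) :
    ∀ t x, pt (fun t x => Φ (w t x)) t x =
      px (px (px (fun t x => Φ (w t x)))) t x
      + 3 * f (Φ (w t x)) * px (fun t x => Φ (w t x)) t x
          * px (px (fun t x => Φ (w t x))) t x
      + (deriv f (Φ (w t x)) + (f (Φ (w t x))) ^ 2)
          * (px (fun t x => Φ (w t x)) t x) ^ 3
      + a * (f (Φ (w t x)) * (px (fun t x => Φ (w t x)) t x) ^ 2
          + px (px (fun t x => Φ (w t x))) t x) := by
  intro t x
  -- downgrade smoothness to ∞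
  have hf : ContDiff ℝ ((⊤ : ℕ∞) : WithTop ℕ∞) f := hf.of_le (by simp)
  have hΦ : ContDiff ℝ ((⊤ : ℕ∞) : WithTop ℕ∞) Φ := hΦ.of_le (by simp)
  have hw : ContDiff ℝ ((⊤ : ℕ∞) : WithTop ℕ∞) (Function.uncurry w) := hw.of_le (by simp)
  -- smoothness of derivatives of Φ
  have hΦ1 : ContDiff ℝ ((⊤ : ℕ∞) : WithTop ℕ∞) (deriv Φ) := (contDiff_infty_iff_deriv.mp hΦ).2
  have hΦ2 : ContDiff ℝ ((⊤ : ℕ∞) : WithTop ℕ∞) (deriv (deriv Φ)) := (contDiff_infty_iff_deriv.mp hΦ1).2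
  have dΦ : ∀ s, HasDerivAt Φ (deriv Φ s) s := fun s => (hΦ.differentiable (by simp) s).hasDerivAt
  have dΦ' : ∀ s, HasDerivAt (deriv Φ) (deriv (deriv Φ) s) s :=
    fun s => (hΦ1.differentiable (by simp) s).hasDerivAt
  have dΦ'' : ∀ s, HasDerivAt (deriv (deriv Φ)) (deriv (deriv (deriv Φ)) s) s :=
    fun s => (hΦ2.differentiable (by simp) s).hasDerivAt
  have df : ∀ s, HasDerivAt f (deriv f s) s := fun s => (hf.differentiable (by simp) s).hasDerivAt
  have h2 : ∀ s, deriv (deriv Φ) s = -(f (Φ s) * (deriv Φ s) ^ 2) := fun s => by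
    linarith [hΦeq s]
  -- third derivative of Φ
  have h3 : ∀ s, deriv (deriv (deriv Φ)) s
      = -((deriv f (Φ s) * deriv Φ s) * (deriv Φ s) ^ 2
          + f (Φ s) * (2 * deriv Φ s * deriv (deriv Φ) s)) := by
    intro s
    have hfun : deriv (deriv Φ) = fun s => -(f (Φ s) * (deriv Φ s) ^ 2) := funext h2
    have hA : HasDerivAt (fun s => f (Φ s)) (deriv f (Φ s) * deriv Φ s) s :=
      (df (Φ s)).comp s (dΦ s)
    have hB : HasDerivAt (fun s => (deriv Φ s) ^ 2)
        (2 * deriv Φ s * deriv (deriv Φ) s) s := by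
      have := (dΦ' s).pow 2
      exact (by simpa [pow_one] using this : HasDerivAt (deriv Φ ^ 2) (2 * deriv Φ s * deriv (deriv Φ) s) s)
    have hd : HasDerivAt (fun s => -(f (Φ s) * (deriv Φ s) ^ 2))
        (-((deriv f (Φ s) * deriv Φ s) * (deriv Φ s) ^ 2
          + f (Φ s) * (2 * deriv Φ s * deriv (deriv Φ) s))) s := (hA.mul hB).neg
    conv_lhs => rw [hfun]
    exact hd.deriv
  -- the spatial slice
  set v : ℝ → ℝ := fun y => w t y with hvdef
  have hv : ContDiff ℝ ((⊤ : ℕ∞) : WithTop ℕ∞) v := hw.comp (contDiff_const.prodMk contDiff_id)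
  have hv1 : ContDiff ℝ ((⊤ : ℕ∞) : WithTop ℕ∞) (deriv v) := (contDiff_infty_iff_deriv.mp hv).2
  have hv2 : ContDiff ℝ ((⊤ : ℕ∞) : WithTop ℕ∞) (deriv (deriv v)) := (contDiff_infty_iff_deriv.mp hv1).2
  have dv : ∀ y, HasDerivAt v (deriv v y) y := fun y => (hv.differentiable (by simp) y).hasDerivAt
  have dv' : ∀ y, HasDerivAt (deriv v) (deriv (deriv v) y) y :=
    fun y => (hv1.differentiable (by simp) y).hasDerivAt
  have dv'' : ∀ y, HasDerivAt (deriv (deriv v)) (deriv (deriv (deriv v)) y) y :=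
    fun y => (hv2.differentiable (by simp) y).hasDerivAt
  -- first spatial derivative of Φ ∘ w
  have key1 : ∀ y, px (fun t x => Φ (w t x)) t y = deriv Φ (v y) * deriv v y := by
    intro y
    exact ((dΦ (v y)).comp y (dv y)).deriv
  -- second spatial derivative
  have key2 : ∀ y, px (px (fun t x => Φ (w t x))) t y
      = (deriv (deriv Φ) (v y) * deriv v y) * deriv v y + deriv Φ (v y) * deriv (deriv v) y := by
    intro y
    have hfun : (fun z => px (fun t x => Φ (w t x)) t z)
        = fun z => deriv Φ (v z) * deriv v z := funext key1
    have hd : HasDerivAt (fun z => deriv Φ (v z) * deriv v z)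
        ((deriv (deriv Φ) (v y) * deriv v y) * deriv v y + deriv Φ (v y) * deriv (deriv v) y)
        y := (((dΦ' (v y)).comp y (dv y)).mul (dv' y))
    show deriv (fun z => px (fun t x => Φ (w t x)) t z) y = _
    rw [hfun]
    exact hd.deriv
  -- third spatial derivative
  have key3 : px (px (px (fun t x => Φ (w t x)))) t x
      = (((deriv (deriv (deriv Φ)) (v x) * deriv v x) * deriv v x
            + deriv (deriv Φ) (v x) * deriv (deriv v) x) * deriv v x
          + (deriv (deriv Φ) (v x) * deriv v x) * deriv (deriv v) x)
        + ((deriv (deriv Φ) (v x) * deriv v x) * deriv (deriv v) x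
            + deriv Φ (v x) * deriv (deriv (deriv v)) x) := by
    have hfun : (fun z => px (px (fun t x => Φ (w t x))) t z)
        = fun z => (deriv (deriv Φ) (v z) * deriv v z) * deriv v z
            + deriv Φ (v z) * deriv (deriv v) z := funext key2
    have hd1 : HasDerivAt (fun z => (deriv (deriv Φ) (v z) * deriv v z) * deriv v z)
        (((deriv (deriv (deriv Φ)) (v x) * deriv v x) * deriv v x
            + deriv (deriv Φ) (v x) * deriv (deriv v) x) * deriv v x
          + (deriv (deriv Φ) (v x) * deriv v x) * deriv (deriv v) x) x :=
      ((((dΦ'' (v x)).comp x (dv x)).mul (dv' x)).mul (dv' x))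
    have hd2 : HasDerivAt (fun z => deriv Φ (v z) * deriv (deriv v) z)
        ((deriv (deriv Φ) (v x) * deriv v x) * deriv (deriv v) x
            + deriv Φ (v x) * deriv (deriv (deriv v)) x) x :=
      (((dΦ' (v x)).comp x (dv x)).mul (dv'' x))
    show deriv (fun z => px (px (fun t x => Φ (w t x))) t z) x = _
    rw [hfun]
    exact (hd1.add hd2).deriv
  -- time derivative
  have hwt : HasDerivAt (fun s => w s x) (pt w t x) t := by
    have h : Differentiable ℝ (fun s => w s x) :=
      (hw.comp (contDiff_id.prodMk contDiff_const)).differentiable (by simp)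
    exact (h t).hasDerivAt
  have keyt : pt (fun t x => Φ (w t x)) t x = deriv Φ (v x) * pt w t x :=
    ((dΦ (v x)).comp t hwt).deriv
  -- the linear equation in terms of v
  have heq' : pt w t x = deriv (deriv (deriv v)) x + a * deriv (deriv v) x := heq t x
  -- put everything together
  rw [keyt, key3, key1 x, key2 x, heq', h3 (v x), h2 (v x)]
  show deriv Φ (v x) * _ = _
  ring
end

section
/- Let u : ℝ × ℝ → ℝ be smooth with u_x(t,x) ≠ 0 for all (t,x), and suppose u satisfies u_t = u_x⁻³ u_xxx − 3 u_x⁻⁴ u_xx² at every point. Let v : ℝ × ℝ → ℝ be smooth and satisfy v(t, u(t,x)) = x for all (t,x) (the spatial inverse of u). Then for all (t,x), writing y = u(t,x), one has v_t(t,y) = v_yyy(t,y), i.e. the hodograph transform of u solves the linear equation v_t = v_yyy. -/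
open Function

private lemma sect {h : ℝ → ℝ → ℝ} (hh : ContDiff ℝ (⊤ : ℕ∞) (uncurry h)) (t : ℝ) :
    ContDiff ℝ (⊤ : ℕ∞) (h t) :=
  hh.comp (contDiff_const.prodMk contDiff_id)

private lemma sect_t {h : ℝ → ℝ → ℝ} (hh : ContDiff ℝ (⊤ : ℕ∞) (uncurry h)) (x : ℝ) :
    ContDiff ℝ (⊤ : ℕ∞) (fun s => h s x) :=
  hh.comp (contDiff_id.prodMk contDiff_const)

private lemma px_smooth {h : ℝ → ℝ → ℝ} (hh : ContDiff ℝ (⊤ : ℕ∞) (uncurry h)) :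
    ContDiff ℝ (⊤ : ℕ∞) (uncurry (px h)) := by
  have h1 : ContDiff ℝ (⊤ : ℕ∞) (fun p : ℝ × ℝ => fderiv ℝ (h p.1) p.2 1) := by
    apply ContDiff.fderiv_apply (f := fun (p : ℝ × ℝ) (y : ℝ) => h p.1 y) (g := Prod.snd)
      (k := fun _ => 1)
    · exact hh.comp ((contDiff_fst.comp contDiff_fst).prodMk contDiff_snd)
    · exact contDiff_snd
    · exact contDiff_const
    · exact (by simp)
  exact h1

private lemma pders {h : ℝ → ℝ → ℝ} (hh : ContDiff ℝ (⊤ : ℕ∞) (uncurry h)) (t x : ℝ) :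
    pt h t x = fderiv ℝ (uncurry h) (t, x) (1, 0) ∧
    px h t x = fderiv ℝ (uncurry h) (t, x) (0, 1) := by
  have F := (hh.differentiable (by simp) (t, x)).hasFDerivAt
  constructor
  · have γ : HasDerivAt (fun s : ℝ => (s, x)) ((1 : ℝ), (0 : ℝ)) t :=
      (hasDerivAt_id t).prodMk (hasDerivAt_const t x)
    exact (F.comp_hasDerivAt t γ).deriv
  · have γ : HasDerivAt (fun y : ℝ => (t, y)) ((0 : ℝ), (1 : ℝ)) x :=
      (hasDerivAt_const x t).prodMk (hasDerivAt_id x)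
    exact (F.comp_hasDerivAt x γ).deriv


/-- The hodograph transform of a solution of
`u_t = u_x⁻³ u_xxx − 3 u_x⁻⁴ u_xx²` solves the linear equation `v_t = v_yyy`. -/
theorem stmt_2 (u : ℝ → ℝ → ℝ) (hu : ContDiff ℝ (⊤ : ℕ∞) (Function.uncurry u))
    (hux : ∀ t x, px u t x ≠ 0)
    (heq : ∀ t x, pt u t x =
      (px u t x) ⁻¹ ^ 3 * px (px (px u)) t x
      - 3 * (px u t x)⁻¹ ^ 4 * (px (px u) t x) ^ 2)
    (v : ℝ → ℝ → ℝ) (hv : ContDiff ℝ (⊤ : ℕ∞) (Function.uncurry v))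
    (hinv : ∀ t x, v t (u t x) = x) :
    ∀ t x, pt v t (u t x) = px (px (px v)) t (u t x) := by
  have hvx := px_smooth hv
  have hvxx := px_smooth hvx
  have hux1 := px_smooth hu
  have huxx := px_smooth hux1
  intro t x
  -- basic HasDerivAt facts (at any point x' in ℝ)
  have du : ∀ x', HasDerivAt (u t) (px u t x') x' :=
    fun x' => ((sect hu t).differentiable (by simp) x').hasDerivAt
  have da : ∀ x', HasDerivAt (fun z => px u t z) (px (px u) t x') x' :=
    fun x' => ((sect hux1 t).differentiable (by simp) x').hasDerivAt
  have db : ∀ x', HasDerivAt (fun z => px (px u) t z) (px (px (px u)) t x') x' :=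
    fun x' => ((sect huxx t).differentiable (by simp) x').hasDerivAt
  have dAu : ∀ x', HasDerivAt (fun z => v t (u t z)) (px v t (u t x') * px u t x') x' :=
    fun x' => (((sect hv t).differentiable (by simp) (u t x')).hasDerivAt).comp x' (du x')
  have dBu : ∀ x', HasDerivAt (fun z => px v t (u t z))
      (px (px v) t (u t x') * px u t x') x' :=
    fun x' => (((sect hvx t).differentiable (by simp) (u t x')).hasDerivAt).comp x' (du x')
  have dCu : ∀ x', HasDerivAt (fun z => px (px v) t (u t z))
      (px (px (px v)) t (u t x') * px u t x') x' :=
    fun x' => (((sect hvxx t).differentiable (by simp) (u t x')).hasDerivAt).comp x' (du x')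
  -- key1 : v_y(u) * u_x = 1
  have key1 : ∀ x', px v t (u t x') * px u t x' = 1 := by
    intro x'
    have h1 : (fun z => v t (u t z)) = fun z => z := funext (hinv t)
    have h2 := dAu x'
    rw [h1] at h2
    exact h2.unique (hasDerivAt_id x')
  -- key2 : v_yy(u) * u_x^2 + v_y(u) * u_xx = 0
  have key2 : ∀ x', px (px v) t (u t x') * px u t x' * px u t x'
      + px v t (u t x') * px (px u) t x' = 0 := by
    intro x'
    have dm := (dBu x').mul (da x')
    have hconst : (fun z => px v t (u t z) * px u t z) = fun _ => (1 : ℝ) := funext key1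
    simp only [Pi.mul_def, Pi.add_def] at dm
    rw [hconst] at dm
    have h0 := dm.unique (hasDerivAt_const x' 1)
    linarith [h0]
  -- key3 : v_yyy(u) * u_x^3 + 3 v_yy(u) u_x u_xx + v_y(u) u_xxx = 0
  have key3 : ∀ x', px (px (px v)) t (u t x') * px u t x' ^ 3
      + 3 * (px (px v) t (u t x') * px u t x' * px (px u) t x')
      + px v t (u t x') * px (px (px u)) t x' = 0 := by
    intro x'
    have dm := (((dCu x').mul (da x')).mul (da x')).add ((dBu x').mul (db x'))
    have hconst : (fun z => px (px v) t (u t z) * px u t z * px u t z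
        + px v t (u t z) * px (px u) t z) = fun _ => (0 : ℝ) := funext key2
    simp only [Pi.mul_def, Pi.add_def] at dm
    rw [hconst] at dm
    have h0 := dm.unique (hasDerivAt_const x' 0)
    linear_combination h0
  -- time derivative relation : v_t(u) + v_y(u) * u_t = 0
  have keyt : pt v t (u t x) + px v t (u t x) * pt u t x = 0 := by
    have γ : HasDerivAt (fun s : ℝ => (s, u s x)) ((1 : ℝ), pt u t x) t :=
      (hasDerivAt_id t).prodMk (((sect_t hu x).differentiable (by simp) t).hasDerivAt)
    have Fd := (hv.differentiable (by simp) (t, u t x)).hasFDerivAt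
    have hc := Fd.comp_hasDerivAt t γ
    have hconst : (Function.uncurry v ∘ fun s : ℝ => (s, u s x)) = fun _ => x :=
      funext fun s => hinv s x
    rw [hconst] at hc
    have h0 := hc.unique (hasDerivAt_const t x)
    have hsplit : ((1 : ℝ), pt u t x) = ((1 : ℝ), (0 : ℝ)) + pt u t x • ((0 : ℝ), (1 : ℝ)) := by
      simp [Prod.ext_iff]
    rw [hsplit, map_add, map_smul] at h0
    obtain ⟨h1, h2⟩ := pders hv t (u t x)
    rw [← h1, ← h2] at h0
    simpa [smul_eq_mul, mul_comm] using h0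
  -- final algebra
  have ha := hux t x
  have e1 := key1 x
  have e2 := key2 x
  have e3 := key3 x
  have hQ := heq t x
  have hA : px v t (u t x) = (px u t x)⁻¹ := eq_inv_of_mul_eq_one_left e1
  rw [hA] at keyt e2 e3
  rw [hQ] at keyt
  field_simp at keyt e2 e3
  have hgoal : pt v t (u t x) * px u t x ^ 8 = px (px (px v)) t (u t x) * px u t x ^ 8 := by
    linear_combination (px u t x ^ 3) * keyt - (px u t x ^ 4) * e3 + (3 * px u t x ^ 3 * px (px u) t x) * e2
  exact mul_right_cancel₀ (pow_ne_zero 8 ha) hgoal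
end

section
/- Let α ∈ ℝ with α ≠ −1, let a ∈ ℝ, and let u : ℝ × ℝ → ℝ be smooth with u(t,x) > 0 for all (t,x). If u satisfies u_t = u_xxx + (3α/u) u_x u_xx + (α(α−1)/u²) u_x³ + a ((α/u) u_x² + u_xx) at every point, then w(t,x) = u(t,x)^{α+1} satisfies the linear equation w_t = w_xxx + a w_xx at every point. -/
open scoped ContDiff

section aux
variable (α : ℝ) (f : ℝ → ℝ)

lemma aux_d1 (hf : ContDiff ℝ ∞ f) (hpos : ∀ x, 0 < f x) :
    deriv (fun x => f x ^ (α + 1)) = fun x => deriv f x * (α + 1) * f x ^ α := by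
  funext x
  have h0 : HasDerivAt f (deriv f x) x :=
    ((hf.differentiable (by norm_num)) x).hasDerivAt
  have h := h0.rpow_const (p := α + 1) (Or.inl (hpos x).ne')
  simpa using h.deriv

lemma aux_d2 (hf : ContDiff ℝ ∞ f) (hpos : ∀ x, 0 < f x) :
    deriv (deriv (fun x => f x ^ (α + 1))) = fun x =>
      deriv (deriv f) x * (α + 1) * f x ^ α
      + deriv f x * (α + 1) * (deriv f x * α * f x ^ (α - 1)) := by
  funext x
  rw [aux_d1 α f hf hpos]
  have h0 : HasDerivAt f (deriv f x) x := ((hf.differentiable (by norm_num)) x).hasDerivAt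
  have hf1 : ContDiff ℝ ∞ (deriv f) := (contDiff_infty_iff_deriv.mp hf).2
  have h1 : HasDerivAt (deriv f) (deriv (deriv f) x) x :=
    ((hf1.differentiable (by norm_num)) x).hasDerivAt
  have hp : HasDerivAt (fun x => f x ^ α) (deriv f x * α * f x ^ (α - 1)) x :=
    h0.rpow_const (Or.inl (hpos x).ne')
  have H : HasDerivAt (fun x => deriv f x * (α + 1) * f x ^ α)
      (deriv (deriv f) x * (α + 1) * f x ^ α
        + deriv f x * (α + 1) * (deriv f x * α * f x ^ (α - 1))) x :=
    (h1.mul_const (α + 1)).mul hp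
  exact H.deriv

lemma aux_d3 (hf : ContDiff ℝ ∞ f) (hpos : ∀ x, 0 < f x) :
    deriv (deriv (deriv (fun x => f x ^ (α + 1)))) = fun x =>
      (α + 1) * (deriv (deriv (deriv f)) x * f x ^ α
        + 3 * α * deriv f x * deriv (deriv f) x * f x ^ (α - 1)
        + α * (α - 1) * (deriv f x) ^ 3 * f x ^ (α - 2)) := by
  funext x
  rw [aux_d2 α f hf hpos]
  have h0 : HasDerivAt f (deriv f x) x := ((hf.differentiable (by norm_num)) x).hasDerivAt
  have hf1 : ContDiff ℝ ∞ (deriv f) := (contDiff_infty_iff_deriv.mp hf).2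
  have hf2 : ContDiff ℝ ∞ (deriv (deriv f)) := (contDiff_infty_iff_deriv.mp hf1).2
  have h1 : HasDerivAt (deriv f) (deriv (deriv f) x) x :=
    ((hf1.differentiable (by norm_num)) x).hasDerivAt
  have h2 : HasDerivAt (deriv (deriv f)) (deriv (deriv (deriv f)) x) x :=
    ((hf2.differentiable (by norm_num)) x).hasDerivAt
  have hpa : HasDerivAt (fun x => f x ^ α) (deriv f x * α * f x ^ (α - 1)) x :=
    h0.rpow_const (Or.inl (hpos x).ne')
  have hpb : HasDerivAt (fun x => f x ^ (α - 1)) (deriv f x * (α - 1) * f x ^ (α - 1 - 1)) x :=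
    h0.rpow_const (Or.inl (hpos x).ne')
  have H1 : HasDerivAt (fun x => deriv (deriv f) x * (α + 1) * f x ^ α)
      (deriv (deriv (deriv f)) x * (α + 1) * f x ^ α
        + deriv (deriv f) x * (α + 1) * (deriv f x * α * f x ^ (α - 1))) x :=
    (h2.mul_const (α + 1)).mul hpa
  have H2 : HasDerivAt (fun x => deriv f x * (α + 1) * (deriv f x * α * f x ^ (α - 1)))
      (deriv (deriv f) x * (α + 1) * (deriv f x * α * f x ^ (α - 1))
        + deriv f x * (α + 1) *
          ((deriv (deriv f) x * α) * f x ^ (α - 1)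
            + deriv f x * α * (deriv f x * (α - 1) * f x ^ (α - 1 - 1)))) x :=
    (h1.mul_const (α + 1)).mul (((h1.mul_const α).mul hpb).congr_deriv (by ring))
  have H := (H1.add H2).deriv
  rw [show (fun x => deriv (deriv f) x * (α + 1) * f x ^ α
      + deriv f x * (α + 1) * (deriv f x * α * f x ^ (α - 1)))
    = (fun x => (fun x => deriv (deriv f) x * (α + 1) * f x ^ α) x
      + (fun x => deriv f x * (α + 1) * (deriv f x * α * f x ^ (α - 1))) x) from rfl]
  erw [H]
  have : α - 1 - 1 = α - 2 := by ring
  rw [this]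
  ring
end aux

/-- For `β = α(α−1)` and `α ≠ −1`, the equation
`u_t = u_xxx + (3α/u) u_x u_xx + (α(α−1)/u²) u_x³ + a((α/u) u_x² + u_xx)`
is linearized to `w_t = w_xxx + a w_xx` by the power substitution `w = u^(α+1)`. -/
theorem stmt_3 (α a : ℝ) (hα : α ≠ -1)
    (u : ℝ → ℝ → ℝ) (hu : ContDiff ℝ (⊤ : ℕ∞) (Function.uncurry u))
    (hupos : ∀ t x, 0 < u t x)
    (heq : ∀ t x, pt u t x =
      px (px (px u)) t x
      + (3 * α / u t x) * px u t x * px (px u) t x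
      + (α * (α - 1) / (u t x) ^ 2) * (px u t x) ^ 3
      + a * ((α / u t x) * (px u t x) ^ 2 + px (px u) t x)) :
    ∀ t x, pt (fun t x => u t x ^ (α + 1)) t x =
      px (px (px (fun t x => u t x ^ (α + 1)))) t x
      + a * px (px (fun t x => u t x ^ (α + 1))) t x := by
  intro t x
  have hf : ContDiff ℝ ∞ (u t) :=
    (hu.of_le (by simp)).comp (contDiff_const.prodMk contDiff_id)
  have hg : ContDiff ℝ ∞ (fun s => u s x) :=
    (hu.of_le (by simp)).comp (contDiff_id.prodMk contDiff_const)
  have hpos : ∀ y, 0 < u t y := fun y => hupos t y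
  -- time derivative of w
  have hT : pt (fun t x => u t x ^ (α + 1)) t x
      = deriv (fun s => u s x) t * (α + 1) * u t x ^ α := by
    have h0 : HasDerivAt (fun s => u s x) (deriv (fun s => u s x) t) t :=
      ((hg.differentiable (by norm_num)) t).hasDerivAt
    have h := h0.rpow_const (p := α + 1) (Or.inl (hupos t x).ne')
    simpa [pt] using h.deriv
  -- unfold px to iterated derivs of f := u t
  have e2 : px (px (fun t x => u t x ^ (α + 1))) t
      = deriv (deriv (fun y => u t y ^ (α + 1))) := rfl
  have e3 : px (px (px (fun t x => u t x ^ (α + 1)))) t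
      = deriv (deriv (deriv (fun y => u t y ^ (α + 1)))) := rfl
  have hfe : (fun y => u t y ^ (α + 1)) = fun y => (u t) y ^ (α + 1) := rfl
  have h2 := congrFun (aux_d2 α (u t) hf hpos) x
  have h3 := congrFun (aux_d3 α (u t) hf hpos) x
  have hux1 : px u t x = deriv (u t) x := rfl
  have hux2 : px (px u) t x = deriv (deriv (u t)) x := rfl
  have hux3 : px (px (px u)) t x = deriv (deriv (deriv (u t))) x := rfl
  have hpt : pt u t x = deriv (fun s => u s x) t := rfl
  rw [hT, e2, e3, hfe, h2, h3]
  rw [← hpt, heq t x, hux1, hux2, hux3]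
  set U := u t x with hU
  set X := deriv (u t) x
  set Y := deriv (deriv (u t)) x
  set Z := deriv (deriv (deriv (u t))) x
  have hUne : U ≠ 0 := (hupos t x).ne'
  rw [show α - 2 = α - 1 - 1 by ring]
  simp only [Real.rpow_sub_one hUne]
  field_simp
  ring
end

section
/- Let a ∈ ℝ and let u : ℝ × ℝ → ℝ be smooth with u(t,x) > 0 for all (t,x). If u satisfies u_t = u_xxx − (3/u) u_x u_xx + (2/u²) u_x³ + a (−(1/u) u_x² + u_xx) at every point, then w(t,x) = log u(t,x) satisfies the linear equation w_t = w_xxx + a w_xx at every point. -/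
/-- The case `α = −1`, `β = 2`: the equation
`u_t = u_xxx − (3/u) u_x u_xx + (2/u²) u_x³ + a(−(1/u) u_x² + u_xx)`
is linearized to `w_t = w_xxx + a w_xx` by `w = log u`. -/
theorem stmt_4 (a : ℝ)
    (u : ℝ → ℝ → ℝ) (hu : ContDiff ℝ (⊤ : ℕ∞) (Function.uncurry u))
    (hupos : ∀ t x, 0 < u t x)
    (heq : ∀ t x, pt u t x =
      px (px (px u)) t x
      - (3 / u t x) * px u t x * px (px u) t x
      + (2 / (u t x) ^ 2) * (px u t x) ^ 3
      + a * (-(1 / u t x) * (px u t x) ^ 2 + px (px u) t x)) :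
    ∀ t x, pt (fun t x => Real.log (u t x)) t x =
      px (px (px (fun t x => Real.log (u t x)))) t x
      + a * px (px (fun t x => Real.log (u t x))) t x := by
  intro t x
  -- the space slice
  have hf : ContDiff ℝ (⊤ : ℕ∞) (fun y => u t y) :=
    hu.comp (contDiff_const.prodMk contDiff_id)
  have hfd : Differentiable ℝ (fun y => u t y) := hf.differentiable (by simp)
  have hf' : ContDiff ℝ ((⊤ : ℕ∞) : WithTop ℕ∞) (fun y => u t y) := hf.of_le (by simp)
  have hg1 : ContDiff ℝ ((⊤ : ℕ∞) : WithTop ℕ∞) (deriv (fun y => u t y)) :=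
    (contDiff_infty_iff_deriv.mp hf').2
  have hg1d : Differentiable ℝ (deriv (fun y => u t y)) := hg1.differentiable (by simp)
  have hg2 : ContDiff ℝ ((⊤ : ℕ∞) : WithTop ℕ∞) (deriv (deriv (fun y => u t y))) :=
    (contDiff_infty_iff_deriv.mp hg1).2
  have hg2d : Differentiable ℝ (deriv (deriv (fun y => u t y))) := hg2.differentiable (by simp)
  have hfpos : ∀ y, 0 < u t y := fun y => hupos t y
  have hfne : ∀ y, u t y ≠ 0 := fun y => (hfpos y).ne'
  set F : ℝ → ℝ := fun y => u t y with hF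
  set d1 : ℝ → ℝ := deriv F with hd1
  set d2 : ℝ → ℝ := deriv d1 with hd2
  set d3 : ℝ → ℝ := deriv d2 with hd3
  -- first log derivative
  have hw1 : ∀ y, deriv (fun z => Real.log (u t z)) y = d1 y / F y := by
    intro y
    exact ((hfd y).hasDerivAt.log (hfne y)).deriv
  -- second log derivative
  have hw2 : ∀ y, deriv (fun z => d1 z / F z) y
      = (d2 y * F y - d1 y * d1 y) / F y ^ 2 := by
    intro y
    exact (((hg1d y).hasDerivAt).div ((hfd y).hasDerivAt) (hfne y)).deriv
  -- third log derivative
  have hw3 : deriv (fun y => (d2 y * F y - d1 y * d1 y) / F y ^ 2) x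
      = ((d3 x * F x + d2 x * d1 x - (d2 x * d1 x + d1 x * d2 x)) * F x ^ 2
          - (d2 x * F x - d1 x * d1 x) * (2 * F x ^ 1 * d1 x)) / (F x ^ 2) ^ 2 := by
    have hnum : HasDerivAt (fun y => d2 y * F y - d1 y * d1 y)
        (d3 x * F x + d2 x * d1 x - (d2 x * d1 x + d1 x * d2 x)) x :=
      (((hg2d x).hasDerivAt).mul ((hfd x).hasDerivAt)).sub
        (((hg1d x).hasDerivAt).mul ((hg1d x).hasDerivAt))
    have hden : HasDerivAt (fun y => F y ^ 2) (2 * F x ^ 1 * d1 x) x :=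
      ((hfd x).hasDerivAt).pow 2
    exact (hnum.div hden (pow_ne_zero 2 (hfne x))).deriv
  -- rewrite the spatial derivatives of the logarithm
  have e1 : (fun y => px (fun t x => Real.log (u t x)) t y) = fun y => d1 y / F y :=
    funext fun y => hw1 y
  have e2 : (fun y => px (px (fun t x => Real.log (u t x))) t y)
      = fun y => (d2 y * F y - d1 y * d1 y) / F y ^ 2 := by
    funext y
    show deriv (fun z => px (fun t x => Real.log (u t x)) t z) y = _
    rw [show (fun z => px (fun t x => Real.log (u t x)) t z)
        = fun z => d1 z / F z from e1]
    exact hw2 y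
  have hpxx : px (px (fun t x => Real.log (u t x))) t x
      = (d2 x * F x - d1 x * d1 x) / F x ^ 2 := congrFun e2 x
  have hpxxx : px (px (px (fun t x => Real.log (u t x)))) t x
      = ((d3 x * F x + d2 x * d1 x - (d2 x * d1 x + d1 x * d2 x)) * F x ^ 2
          - (d2 x * F x - d1 x * d1 x) * (2 * F x ^ 1 * d1 x)) / (F x ^ 2) ^ 2 := by
    show deriv (fun y => px (px (fun t x => Real.log (u t x))) t y) x = _
    rw [e2]
    exact hw3
  -- time derivative of the logarithm
  have hT : DifferentiableAt ℝ (fun s => u s x) t := by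
    have : (fun s => u s x) = (Function.uncurry u) ∘ (fun s => (s, x)) := rfl
    rw [this]
    exact ((hu.differentiable (by simp)) (t, x)).comp t
      (differentiableAt_id.prodMk (differentiableAt_const x))
  have hwt : pt (fun t x => Real.log (u t x)) t x = pt u t x / F x := by
    show deriv (fun s => Real.log (u s x)) t = _
    exact (hT.hasDerivAt.log (hfne x)).deriv
  -- spatial derivatives of u itself
  have hu1 : px u t x = d1 x := rfl
  have hu2 : px (px u) t x = d2 x := rfl
  have hu3 : px (px (px u)) t x = d3 x := rfl
  rw [hwt, hpxx, hpxxx, heq t x, hu1, hu2, hu3]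
  have hFx : F x ≠ 0 := hfne x
  show (d3 x - 3 / F x * d1 x * d2 x + 2 / F x ^ 2 * d1 x ^ 3
      + a * (-(1 / F x) * d1 x ^ 2 + d2 x)) / F x = _
  field_simp
  ring
end

section
/- Let α, β, m ∈ ℝ with m ≠ 0, and set α̃ = m(α+1) − 1 and β̃ = (3α + β + 1)m² − 3(α+1)m + 2. Let w : ℝ × ℝ → ℝ be smooth with w(t,x) > 0 for all (t,x), and suppose w satisfies w_t = w_xxx + (3α̃/w) w_x w_xx + (β̃/w²) w_x³ at every point. Then u(t,x) = w(t,x)^m satisfies u_t = u_xxx + (3α/u) u_x u_xx + (β/u²) u_x³ at every point. -/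
open scoped ContDiff


/-- The power substitution `u = w^m` maps the family
`u_t = u_xxx + (3α/u) u_x u_xx + (β/u²) u_x³` into itself with parameters
`α̃ = m(α+1)−1`, `β̃ = (3α+β+1)m² − 3(α+1)m + 2`. -/
theorem stmt_6 (α β m : ℝ) (hm : m ≠ 0)
    (w : ℝ → ℝ → ℝ) (hw : ContDiff ℝ (⊤ : ℕ∞) (Function.uncurry w))
    (hwpos : ∀ t x, 0 < w t x)
    (heq : ∀ t x, pt w t x =
      px (px (px w)) t x
      + (3 * (m * (α + 1) - 1) / w t x) * px w t x * px (px w) t x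
      + (((3 * α + β + 1) * m ^ 2 - 3 * (α + 1) * m + 2) / (w t x) ^ 2)
          * (px w t x) ^ 3) :
    ∀ t x, pt (fun t x => w t x ^ m) t x =
      px (px (px (fun t x => w t x ^ m))) t x
      + (3 * α / (w t x ^ m)) * px (fun t x => w t x ^ m) t x
          * px (px (fun t x => w t x ^ m)) t x
      + (β / (w t x ^ m) ^ 2) * (px (fun t x => w t x ^ m) t x) ^ 3 := by
  intro t x
  -- smoothness of the slices
  have hw' : ContDiff ℝ ∞ (Function.uncurry w) := hw.of_le (by simp)
  have hf : ContDiff ℝ ∞ (w t) := hw'.comp ((contDiff_const (c := t)).prodMk contDiff_id)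
  have hg : ContDiff ℝ ∞ (fun s => w s x) :=
    hw'.comp (contDiff_id.prodMk (contDiff_const (c := x)))
  have hf1 : ContDiff ℝ ∞ (deriv (w t)) := (contDiff_infty_iff_deriv.mp hf).2
  have hf2 : ContDiff ℝ ∞ (deriv (deriv (w t))) := (contDiff_infty_iff_deriv.mp hf1).2
  have h1i : (∞ : WithTop ℕ∞) ≠ 0 := by simp
  have hpos : ∀ y, 0 < w t y := hwpos t
  have Df : ∀ y, HasDerivAt (fun z => w t z) (px w t y) y := fun y =>
    ((hf.differentiable h1i) y).hasDerivAt
  have Df1 : ∀ y, HasDerivAt (fun z => px w t z) (px (px w) t y) y := fun y =>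
    ((hf1.differentiable h1i) y).hasDerivAt
  have Df2 : ∀ y, HasDerivAt (fun z => px (px w) t z) (px (px (px w)) t y) y := fun y =>
    ((hf2.differentiable h1i) y).hasDerivAt
  have Dg : HasDerivAt (fun s => w s x) (pt w t x) t :=
    ((hg.differentiable h1i) t).hasDerivAt
  -- first spatial derivative of u = w^m
  have U1 : ∀ y, px (fun t x => w t x ^ m) t y
      = px w t y * m * w t y ^ (m - 1) := fun y =>
    ((Df y).rpow_const (Or.inl (hpos y).ne')).deriv
  -- second spatial derivative
  have U2 : ∀ y, px (px (fun t x => w t x ^ m)) t y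
      = px (px w) t y * m * w t y ^ (m - 1)
        + px w t y * m * (px w t y * (m - 1) * w t y ^ (m - 1 - 1)) := by
    intro y
    have h1 : (fun z => px (fun t x => w t x ^ m) t z)
        = fun z => px w t z * m * w t z ^ (m - 1) := funext fun z => U1 z
    show deriv (fun z => px (fun t x => w t x ^ m) t z) y = _
    rw [h1]
    exact (((Df1 y).mul_const m).mul
      ((Df y).rpow_const (Or.inl (hpos y).ne'))).deriv
  -- third spatial derivative
  have U3 : px (px (px (fun t x => w t x ^ m))) t x
      = (px (px (px w)) t x * m * w t x ^ (m - 1)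
          + px (px w) t x * m * (px w t x * (m - 1) * w t x ^ (m - 1 - 1)))
        + ((px (px w) t x * m * (m - 1) + px w t x * m * 0) * (px w t x * w t x ^ (m - 1 - 1))
            + px w t x * m * (m - 1) * (px (px w) t x * w t x ^ (m - 1 - 1)
              + px w t x * (px w t x * (m - 1 - 1) * w t x ^ (m - 1 - 1 - 1)))) := by
    have h1 : (fun z => px (px (fun t x => w t x ^ m)) t z)
        = fun z => px (px w) t z * m * w t z ^ (m - 1)
          + px w t z * m * (px w t z * (m - 1) * w t z ^ (m - 1 - 1)) := funext fun z => U2 z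
    show deriv (fun z => px (px (fun t x => w t x ^ m)) t z) x = _
    rw [h1]
    have hA : HasDerivAt (fun z => px (px w) t z * m * w t z ^ (m - 1))
        (px (px (px w)) t x * m * w t x ^ (m - 1)
          + px (px w) t x * m * (px w t x * (m - 1) * w t x ^ (m - 1 - 1))) x :=
      ((Df2 x).mul_const m).mul ((Df x).rpow_const (Or.inl (hpos x).ne'))
    have hB : HasDerivAt
        (fun z => px w t z * m * (m - 1) * (px w t z * w t z ^ (m - 1 - 1)))
        ((px (px w) t x * m * (m - 1) + px w t x * m * 0) * (px w t x * w t x ^ (m - 1 - 1))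
          + px w t x * m * (m - 1) * (px (px w) t x * w t x ^ (m - 1 - 1)
            + px w t x * (px w t x * (m - 1 - 1) * w t x ^ (m - 1 - 1 - 1)))) x := by
      have h1 : HasDerivAt (fun z => px w t z * m * (m - 1))
          (px (px w) t x * m * (m - 1) + px w t x * m * 0) x := by
        simpa using (((Df1 x).mul_const m).mul_const (m - 1)).congr_deriv (by ring)
      have h2 : HasDerivAt (fun z => px w t z * w t z ^ (m - 1 - 1))
          (px (px w) t x * w t x ^ (m - 1 - 1)
            + px w t x * (px w t x * (m - 1 - 1) * w t x ^ (m - 1 - 1 - 1))) x :=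
        (Df1 x).mul ((Df x).rpow_const (Or.inl (hpos x).ne'))
      exact h1.mul h2
    have hB' : HasDerivAt
        (fun z => px w t z * m * (px w t z * (m - 1) * w t z ^ (m - 1 - 1)))
        ((px (px w) t x * m * (m - 1) + px w t x * m * 0) * (px w t x * w t x ^ (m - 1 - 1))
          + px w t x * m * (m - 1) * (px (px w) t x * w t x ^ (m - 1 - 1)
            + px w t x * (px w t x * (m - 1 - 1) * w t x ^ (m - 1 - 1 - 1)))) x := by
      have : (fun z => px w t z * m * (px w t z * (m - 1) * w t z ^ (m - 1 - 1)))
          = fun z => px w t z * m * (m - 1) * (px w t z * w t z ^ (m - 1 - 1)) :=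
        funext fun z => by ring
      rw [this]; exact hB
    exact (hA.add hB').deriv
  -- time derivative of u = w^m
  have UT : pt (fun t x => w t x ^ m) t x = pt w t x * m * w t x ^ (m - 1) :=
    (Dg.rpow_const (Or.inl (hpos x).ne')).deriv
  -- rewrite everything
  rw [UT, U1 x, U2 x, U3, heq t x]
  -- exponent arithmetic
  have h0 : (0:ℝ) < w t x := hpos x
  have e1 : w t x ^ (m - 1) = w t x ^ m / w t x := by
    rw [Real.rpow_sub h0, Real.rpow_one]
  have e2 : w t x ^ (m - 1 - 1) = w t x ^ m / (w t x * w t x) := by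
    rw [Real.rpow_sub h0, Real.rpow_sub h0, Real.rpow_one, div_div]
  have e3 : w t x ^ (m - 1 - 1 - 1) = w t x ^ m / (w t x * (w t x * w t x)) := by
    rw [Real.rpow_sub h0, Real.rpow_sub h0, Real.rpow_sub h0, Real.rpow_one, div_div, div_div]
  rw [e1, e2, e3]
  have ha : w t x ≠ 0 := h0.ne'
  have hA : w t x ^ m ≠ 0 := (Real.rpow_pos_of_pos h0 m).ne'
  field_simp
  ring
end

section
/- Let u : ℝ × ℝ → ℝ be smooth with u(t,x) ≠ 0 for all (t,x), and suppose u satisfies u_t = u_xxx − (3/u) u_x u_xx at every point. Then the Cole–Hopf transform w(t,x) = u_x(t,x)/u(t,x) satisfies the modified KdV equation w_t = w_xxx − 6 w² w_x at every point. -/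
open Function

/-- Directional derivative operator. -/
noncomputable def DD (v : ℝ × ℝ) (f : ℝ × ℝ → ℝ) : ℝ × ℝ → ℝ := fun p => fderiv ℝ f p v

lemma DD_smooth {f : ℝ × ℝ → ℝ} (hf : ContDiff ℝ (⊤ : ℕ∞) f) (v : ℝ × ℝ) :
    ContDiff ℝ (⊤ : ℕ∞) (DD v f) :=
  (ContinuousLinearMap.apply ℝ ℝ v).contDiff.comp (hf.fderiv_right (by simp))

lemma DD_comm {f : ℝ × ℝ → ℝ} (hf : ContDiff ℝ (⊤ : ℕ∞) f) (v w : ℝ × ℝ) (p : ℝ × ℝ) :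
    DD v (DD w f) p = DD w (DD v f) p := by
  have hsymm : IsSymmSndFDerivAt ℝ f p := hf.contDiffAt.isSymmSndFDerivAt (by rw [minSmoothness_of_isRCLikeNormedField]; exact WithTop.coe_le_coe.mpr le_top)
  have hdf : ContDiff ℝ (⊤ : ℕ∞) (fderiv ℝ f) := hf.fderiv_right (by simp)
  have h2 : ∀ z : ℝ × ℝ, fderiv ℝ (DD z f) p
      = (ContinuousLinearMap.apply ℝ ℝ z).comp (fderiv ℝ (fderiv ℝ f) p) := by
    intro z
    exact (((ContinuousLinearMap.apply ℝ ℝ z).hasFDerivAt).comp p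
      ((hdf.differentiable (by simp)) p).hasFDerivAt).fderiv
  show fderiv ℝ (DD w f) p v = fderiv ℝ (DD v f) p w
  rw [h2, h2]
  simpa using hsymm.eq v w

variable {p : ℝ × ℝ}

lemma DD_add (f g : ℝ × ℝ → ℝ) (hf : DifferentiableAt ℝ f p) (hg : DifferentiableAt ℝ g p)
    (v : ℝ × ℝ) : DD v (fun q => f q + g q) p = DD v f p + DD v g p := by
  simp [DD, fderiv_fun_add hf hg]

lemma DD_sub (f g : ℝ × ℝ → ℝ) (hf : DifferentiableAt ℝ f p) (hg : DifferentiableAt ℝ g p)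
    (v : ℝ × ℝ) : DD v (fun q => f q - g q) p = DD v f p - DD v g p := by
  simp [DD, fderiv_fun_sub hf hg]

lemma DD_mul (f g : ℝ × ℝ → ℝ) (hf : DifferentiableAt ℝ f p) (hg : DifferentiableAt ℝ g p)
    (v : ℝ × ℝ) : DD v (fun q => f q * g q) p = f p * DD v g p + g p * DD v f p := by
  simp [DD, fderiv_fun_mul hf hg]

lemma DD_const_mul (f : ℝ × ℝ → ℝ) (hf : DifferentiableAt ℝ f p) (c : ℝ)
    (v : ℝ × ℝ) : DD v (fun q => c * f q) p = c * DD v f p := by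
  simp [DD, fderiv_const_mul hf c]

lemma DD_div (f g : ℝ × ℝ → ℝ) (hf : DifferentiableAt ℝ f p) (hg : DifferentiableAt ℝ g p)
    (h0 : g p ≠ 0) (v : ℝ × ℝ) :
    DD v (fun q => f q / g q) p = (DD v f p * g p - f p * DD v g p) / (g p * g p) := by
  have hinv : HasFDerivAt (fun q => (g q)⁻¹) ((-(g p ^ 2)⁻¹) • fderiv ℝ g p) p :=
    (hasDerivAt_inv h0).comp_hasFDerivAt p hg.hasFDerivAt
  have hmul : HasFDerivAt (fun q => f q * (g q)⁻¹) _ p := hf.hasFDerivAt.mul hinv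
  have heqf : (fun q => f q / g q) = fun q => f q * (g q)⁻¹ := by
    funext q; rw [div_eq_mul_inv]
  rw [DD, heqf, hmul.fderiv]
  simp only [ContinuousLinearMap.add_apply, ContinuousLinearMap.smul_apply, smul_eq_mul, DD]
  field_simp
  ring

/-- Bridge between `pt` and `DD (1,0)`. -/
lemma pt_eq {u : ℝ → ℝ → ℝ} {F : ℝ × ℝ → ℝ} (huF : ∀ a b, u a b = F (a, b))
    (hF : Differentiable ℝ F) (t x : ℝ) : pt u t x = DD (1, 0) F (t, x) := by
  have h1 : HasDerivAt (fun s : ℝ => (s, x)) ((1 : ℝ), (0 : ℝ)) t :=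
    (hasDerivAt_id t).prodMk (hasDerivAt_const t x)
  have h : HasDerivAt (fun s => F (s, x)) (fderiv ℝ F (t, x) (1, 0)) t :=
    (hF (t, x)).hasFDerivAt.comp_hasDerivAt t h1
  have : (fun s => u s x) = fun s => F (s, x) := funext fun s => huF s x
  rw [pt, this]
  exact h.deriv

lemma px_eq {u : ℝ → ℝ → ℝ} {F : ℝ × ℝ → ℝ} (huF : ∀ a b, u a b = F (a, b))
    (hF : Differentiable ℝ F) (t x : ℝ) : px u t x = DD (0, 1) F (t, x) := by
  have h1 : HasDerivAt (fun y : ℝ => (t, y)) ((0 : ℝ), (1 : ℝ)) x :=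
    (hasDerivAt_const x t).prodMk (hasDerivAt_id x)
  have h : HasDerivAt (fun y => F (t, y)) (fderiv ℝ F (t, x) (0, 1)) x :=
    (hF (t, x)).hasFDerivAt.comp_hasDerivAt x h1
  have : (fun y => u t y) = fun y => F (t, y) := funext fun y => huF t y
  rw [px, this]
  exact h.deriv

lemma calc_main (U : ℝ × ℝ → ℝ) (hU : ContDiff ℝ (⊤ : ℕ∞) U) (hU0 : ∀ q, U q ≠ 0)
    (heqU : ∀ q, DD (1,0) U q = DD (0,1) (DD (0,1) (DD (0,1) U)) q
      - 3 / U q * DD (0,1) U q * DD (0,1) (DD (0,1) U) q) (p : ℝ × ℝ) :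
    DD (1,0) (fun q => DD (0,1) U q / U q) p
      = DD (0,1) (DD (0,1) (DD (0,1) (fun q => DD (0,1) U q / U q))) p
        - 6 * (DD (0,1) U p / U p) ^ 2 * DD (0,1) (fun q => DD (0,1) U q / U q) p := by
  have d0 : Differentiable ℝ U := hU.differentiable (by simp)
  have s1 : ContDiff ℝ (⊤ : ℕ∞) (DD (0,1) U) := DD_smooth hU (0,1)
  have s2 : ContDiff ℝ (⊤ : ℕ∞) (DD (0,1) (DD (0,1) U)) := DD_smooth s1 (0,1)
  have s3 : ContDiff ℝ (⊤ : ℕ∞) (DD (0,1) (DD (0,1) (DD (0,1) U))) := DD_smooth s2 (0,1)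
  have d1 : Differentiable ℝ (DD (0,1) U) := s1.differentiable (by simp)
  have d2 : Differentiable ℝ (DD (0,1) (DD (0,1) U)) := s2.differentiable (by simp)
  have d3 : Differentiable ℝ (DD (0,1) (DD (0,1) (DD (0,1) U))) := s3.differentiable (by simp)
  have A : ∀ q, DD (0,1) (fun q => DD (0,1) U q / U q) q
      = (DD (0,1) (DD (0,1) U) q * U q - DD (0,1) U q * DD (0,1) U q) / (U q * U q) :=
    fun q => DD_div (DD (0,1) U) U (d1 q) (d0 q) (hU0 q) (0,1)
  have A' : DD (0,1) (fun q => DD (0,1) U q / U q)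
      = fun q => (DD (0,1) (DD (0,1) U) q * U q - DD (0,1) U q * DD (0,1) U q) / (U q * U q) :=
    funext A
  have B : DD (0,1) (DD (0,1) (fun q => DD (0,1) U q / U q))
      = fun q => (DD (0,1) (DD (0,1) (DD (0,1) U)) q * U q * U q
          - 3 * (DD (0,1) U q * DD (0,1) (DD (0,1) U) q * U q)
          + 2 * (DD (0,1) U q * DD (0,1) U q * DD (0,1) U q)) / (U q * U q * U q) := by
    rw [A']
    funext q
    rw [DD_div (fun q => DD (0,1) (DD (0,1) U) q * U q - DD (0,1) U q * DD (0,1) U q)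
      (fun q => U q * U q)
      (((d2.mul d0).sub (d1.mul d1)) q) ((d0.mul d0) q) (mul_ne_zero (hU0 q) (hU0 q))]
    rw [DD_sub (fun q => DD (0,1) (DD (0,1) U) q * U q) (fun q => DD (0,1) U q * DD (0,1) U q)
      ((d2.mul d0) q) ((d1.mul d1) q)]
    rw [DD_mul (DD (0,1) (DD (0,1) U)) U (d2 q) (d0 q),
      DD_mul (DD (0,1) U) (DD (0,1) U) (d1 q) (d1 q),
      DD_mul U U (d0 q) (d0 q)]
    field_simp [hU0 q]
    ring
  have hUt : DD (1,0) U
      = fun q => DD (0,1) (DD (0,1) (DD (0,1) U)) q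
          - 3 * (DD (0,1) U q * DD (0,1) (DD (0,1) U) q) / U q :=
    funext fun q => by rw [heqU q]; ring
  -- left-hand side
  rw [DD_div (DD (0,1) U) U (d1 p) (d0 p) (hU0 p) (1,0)]
  rw [DD_comm hU (1,0) (0,1) p]
  simp only [hUt]
  rw [DD_sub (DD (0,1) (DD (0,1) (DD (0,1) U)))
    (fun q => 3 * (DD (0,1) U q * DD (0,1) (DD (0,1) U) q) / U q) (d3 p)
    (((contDiff_const.mul (s1.mul s2)).div hU hU0 : ContDiff ℝ (⊤ : ℕ∞) _).differentiable (by simp) p)]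
  rw [DD_div (fun q => 3 * (DD (0,1) U q * DD (0,1) (DD (0,1) U) q)) U
    (((differentiable_const (3:ℝ)).mul (d1.mul d2)) p) (d0 p) (hU0 p)]
  rw [DD_const_mul (fun q => DD (0,1) U q * DD (0,1) (DD (0,1) U) q) ((d1.mul d2) p) 3]
  rw [DD_mul (DD (0,1) U) (DD (0,1) (DD (0,1) U)) (d1 p) (d2 p)]
  -- right-hand side: third x-derivative
  rw [B]
  rw [DD_div (fun q => DD (0,1) (DD (0,1) (DD (0,1) U)) q * U q * U q
        - 3 * (DD (0,1) U q * DD (0,1) (DD (0,1) U) q * U q)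
        + 2 * (DD (0,1) U q * DD (0,1) U q * DD (0,1) U q)) (fun q => U q * U q * U q)
    (((((d3.mul d0).mul d0).sub ((differentiable_const (3:ℝ)).mul ((d1.mul d2).mul d0))).add
      ((differentiable_const (2:ℝ)).mul ((d1.mul d1).mul d1))) p)
    (((d0.mul d0).mul d0) p) (mul_ne_zero (mul_ne_zero (hU0 p) (hU0 p)) (hU0 p))]
  rw [DD_add (fun q => DD (0,1) (DD (0,1) (DD (0,1) U)) q * U q * U q
        - 3 * (DD (0,1) U q * DD (0,1) (DD (0,1) U) q * U q))
    (fun q => 2 * (DD (0,1) U q * DD (0,1) U q * DD (0,1) U q))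
    ((((d3.mul d0).mul d0).sub ((differentiable_const (3:ℝ)).mul ((d1.mul d2).mul d0))) p)
    (((differentiable_const (2:ℝ)).mul ((d1.mul d1).mul d1)) p)]
  rw [DD_sub (fun q => DD (0,1) (DD (0,1) (DD (0,1) U)) q * U q * U q)
    (fun q => 3 * (DD (0,1) U q * DD (0,1) (DD (0,1) U) q * U q))
    (((d3.mul d0).mul d0) p)
    (((differentiable_const (3:ℝ)).mul ((d1.mul d2).mul d0)) p)]
  rw [DD_const_mul (fun q => DD (0,1) U q * DD (0,1) (DD (0,1) U) q * U q)
    (((d1.mul d2).mul d0) p) 3]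
  rw [DD_const_mul (fun q => DD (0,1) U q * DD (0,1) U q * DD (0,1) U q)
    (((d1.mul d1).mul d1) p) 2]
  rw [DD_mul (fun q => DD (0,1) (DD (0,1) (DD (0,1) U)) q * U q) U ((d3.mul d0) p) (d0 p)]
  rw [DD_mul (DD (0,1) (DD (0,1) (DD (0,1) U))) U (d3 p) (d0 p)]
  rw [DD_mul (fun q => DD (0,1) U q * DD (0,1) (DD (0,1) U) q) U ((d1.mul d2) p) (d0 p)]
  rw [DD_mul (fun q => DD (0,1) U q * DD (0,1) U q) (DD (0,1) U) ((d1.mul d1) p) (d1 p)]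
  rw [DD_mul (DD (0,1) U) (DD (0,1) U) (d1 p) (d1 p)]
  rw [DD_mul (fun q => U q * U q) U ((d0.mul d0) p) (d0 p)]
  rw [DD_mul U U (d0 p) (d0 p)]
  -- last factor
  rw [A p]
  rw [DD_mul (DD (0,1) U) (DD (0,1) (DD (0,1) U)) (d1 p) (d2 p)]
  field_simp [hU0 p]
  ring

/-- The Cole–Hopf transform `w = u_x/u` of a solution of
`u_t = u_xxx − (3/u) u_x u_xx` solves the modified KdV equation
`w_t = w_xxx − 6 w² w_x`. -/
theorem stmt_7 (u : ℝ → ℝ → ℝ) (hu : ContDiff ℝ (⊤ : ℕ∞) (Function.uncurry u))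
    (hu0 : ∀ t x, u t x ≠ 0)
    (heq : ∀ t x, pt u t x =
      px (px (px u)) t x - (3 / u t x) * px u t x * px (px u) t x) :
    ∀ t x, pt (fun t x => px u t x / u t x) t x =
      px (px (px (fun t x => px u t x / u t x))) t x
      - 6 * (px u t x / u t x) ^ 2 * px (fun t x => px u t x / u t x) t x := by
  intro t x
  have hU : ContDiff ℝ (⊤ : ℕ∞) (Function.uncurry u) := hu
  have d0 : Differentiable ℝ (Function.uncurry u) := hU.differentiable (by simp)
  have s1 : ContDiff ℝ (⊤ : ℕ∞) (DD (0,1) (Function.uncurry u)) := DD_smooth hU (0,1)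
  have d1 := s1.differentiable (by simp)
  have s2 : ContDiff ℝ (⊤ : ℕ∞) (DD (0,1) (DD (0,1) (Function.uncurry u))) := DD_smooth s1 (0,1)
  have d2 := s2.differentiable (by simp)
  have hU0 : ∀ q : ℝ × ℝ, Function.uncurry u q ≠ 0 := fun q => hu0 q.1 q.2
  have b0 : ∀ a b : ℝ, u a b = Function.uncurry u (a, b) := fun _ _ => rfl
  have b1 : ∀ a b, px u a b = DD (0,1) (Function.uncurry u) (a, b) :=
    fun a b => px_eq b0 d0 a b
  have b2 : ∀ a b, px (px u) a b = DD (0,1) (DD (0,1) (Function.uncurry u)) (a, b) :=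
    fun a b => px_eq b1 d1 a b
  have b3 : ∀ a b, px (px (px u)) a b
      = DD (0,1) (DD (0,1) (DD (0,1) (Function.uncurry u))) (a, b) :=
    fun a b => px_eq b2 d2 a b
  have bt : ∀ a b, pt u a b = DD (1,0) (Function.uncurry u) (a, b) :=
    fun a b => pt_eq b0 d0 a b
  have heqU : ∀ q : ℝ × ℝ, DD (1,0) (Function.uncurry u) q
      = DD (0,1) (DD (0,1) (DD (0,1) (Function.uncurry u))) q
        - 3 / Function.uncurry u q * DD (0,1) (Function.uncurry u) q
          * DD (0,1) (DD (0,1) (Function.uncurry u)) q := by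
    intro q
    have h := heq q.1 q.2
    rw [bt q.1 q.2, b3 q.1 q.2, b1 q.1 q.2, b2 q.1 q.2, b0 q.1 q.2] at h
    simpa using h
  -- the Cole–Hopf variable
  have hWs : ContDiff ℝ (⊤ : ℕ∞) (fun q => DD (0,1) (Function.uncurry u) q / Function.uncurry u q) :=
    s1.div hU hU0
  have dW := hWs.differentiable (by simp)
  have c0 : ∀ a b, px u a b / u a b
      = (fun q => DD (0,1) (Function.uncurry u) q / Function.uncurry u q) (a, b) :=
    fun a b => by rw [b1 a b]; rfl
  have c1 : ∀ a b, px (fun t x => px u t x / u t x) a b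
      = DD (0,1) (fun q => DD (0,1) (Function.uncurry u) q / Function.uncurry u q) (a, b) :=
    fun a b => px_eq c0 dW a b
  have dW1 := (DD_smooth hWs (0,1)).differentiable (by simp)
  have c2 : ∀ a b, px (px (fun t x => px u t x / u t x)) a b
      = DD (0,1) (DD (0,1) (fun q => DD (0,1) (Function.uncurry u) q / Function.uncurry u q)) (a, b) :=
    fun a b => px_eq c1 dW1 a b
  have dW2 := (DD_smooth (DD_smooth hWs (0,1)) (0,1)).differentiable (by simp)
  have c3 : ∀ a b, px (px (px (fun t x => px u t x / u t x))) a b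
      = DD (0,1) (DD (0,1) (DD (0,1)
          (fun q => DD (0,1) (Function.uncurry u) q / Function.uncurry u q))) (a, b) :=
    fun a b => px_eq c2 dW2 a b
  have ct : pt (fun t x => px u t x / u t x) t x
      = DD (1,0) (fun q => DD (0,1) (Function.uncurry u) q / Function.uncurry u q) (t, x) :=
    pt_eq c0 dW t x
  rw [ct, c3 t x, c1 t x, b1 t x, b0 t x]
  exact calc_main (Function.uncurry u) hU hU0 heqU (t, x)
end

section
/- Let u : ℝ × ℝ → ℝ be smooth with u(t,x) ≠ 0 for all (t,x), and suppose u satisfies u_t = u_xxx − (3/u) u_x u_xx at every point. Then ψ(t,x) = u_xx(t,x)/u(t,x) satisfies the KdV equation ψ_t = ψ_xxx − 6 ψ ψ_x at every point. -/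
open Function

section helpers

lemma hasDerivAt_snd' {F : ℝ × ℝ → ℝ} (hF : ContDiff ℝ (⊤ : ℕ∞) F) (t x : ℝ) :
    HasDerivAt (fun y => F (t, y)) (fderiv ℝ F (t, x) (0, 1)) x := by
  have h1 : HasFDerivAt F (fderiv ℝ F (t, x)) (t, x) :=
    (hF.differentiable (by simp) (t, x)).hasFDerivAt
  have h2 : HasDerivAt (fun y => ((t, y) : ℝ × ℝ)) ((0 : ℝ), (1 : ℝ)) x :=
    (hasDerivAt_const x t).prodMk (hasDerivAt_id x)
  exact h1.comp_hasDerivAt x h2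

lemma hasDerivAt_fst' {F : ℝ × ℝ → ℝ} (hF : ContDiff ℝ (⊤ : ℕ∞) F) (t x : ℝ) :
    HasDerivAt (fun s => F (s, x)) (fderiv ℝ F (t, x) (1, 0)) t := by
  have h1 : HasFDerivAt F (fderiv ℝ F (t, x)) (t, x) :=
    (hF.differentiable (by simp) (t, x)).hasFDerivAt
  have h2 : HasDerivAt (fun s => ((s, x) : ℝ × ℝ)) ((1 : ℝ), (0 : ℝ)) t :=
    (hasDerivAt_id t).prodMk (hasDerivAt_const t x)
  exact h1.comp_hasDerivAt t h2

lemma px_eq' {v : ℝ → ℝ → ℝ} (hv : ContDiff ℝ (⊤ : ℕ∞) (uncurry v)) (t x : ℝ) :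
    px v t x = fderiv ℝ (uncurry v) (t, x) (0, 1) :=
  (hasDerivAt_snd' hv t x).deriv

lemma pt_eq' {v : ℝ → ℝ → ℝ} (hv : ContDiff ℝ (⊤ : ℕ∞) (uncurry v)) (t x : ℝ) :
    pt v t x = fderiv ℝ (uncurry v) (t, x) (1, 0) :=
  (hasDerivAt_fst' hv t x).deriv

lemma hasDerivAt_px {v : ℝ → ℝ → ℝ} (hv : ContDiff ℝ (⊤ : ℕ∞) (uncurry v)) (t x : ℝ) :
    HasDerivAt (fun y => v t y) (px v t x) x := by
  rw [px_eq' hv]; exact hasDerivAt_snd' hv t x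

lemma hasDerivAt_pt {v : ℝ → ℝ → ℝ} (hv : ContDiff ℝ (⊤ : ℕ∞) (uncurry v)) (t x : ℝ) :
    HasDerivAt (fun s => v s x) (pt v t x) t := by
  rw [pt_eq' hv]; exact hasDerivAt_fst' hv t x

lemma contDiff_fderiv_apply {F : ℝ × ℝ → ℝ} (hF : ContDiff ℝ (⊤ : ℕ∞) F) (w : ℝ × ℝ) :
    ContDiff ℝ (⊤ : ℕ∞) (fun p => fderiv ℝ F p w) :=
  (hF.fderiv_right (m := (⊤ : ℕ∞)) (by simp)).clm_apply contDiff_const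

lemma contDiff_px {v : ℝ → ℝ → ℝ} (hv : ContDiff ℝ (⊤ : ℕ∞) (uncurry v)) :
    ContDiff ℝ (⊤ : ℕ∞) (uncurry (px v)) := by
  have : uncurry (px v) = fun p : ℝ × ℝ => fderiv ℝ (uncurry v) p (0, 1) := by
    funext p; exact px_eq' hv p.1 p.2
  rw [this]; exact contDiff_fderiv_apply hv _

lemma fderiv_apply_swap {F : ℝ × ℝ → ℝ} (hF : ContDiff ℝ (⊤ : ℕ∞) F) (q v w : ℝ × ℝ) :
    fderiv ℝ (fun p => fderiv ℝ F p w) q v = fderiv ℝ (fun p => fderiv ℝ F p v) q w := by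
  have hd : Differentiable ℝ (fderiv ℝ F) :=
    (hF.fderiv_right (m := (⊤ : ℕ∞)) (by simp)).differentiable (by simp)
  have hq : HasFDerivAt (fderiv ℝ F) (fderiv ℝ (fderiv ℝ F) q) q := (hd q).hasFDerivAt
  have key : ∀ z : ℝ × ℝ, HasFDerivAt (fun p => fderiv ℝ F p z)
      ((ContinuousLinearMap.apply ℝ ℝ z).comp (fderiv ℝ (fderiv ℝ F) q)) q := fun z =>
    ((ContinuousLinearMap.apply ℝ ℝ z).hasFDerivAt).comp q hq
  rw [(key w).fderiv, (key v).fderiv]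
  exact second_derivative_symmetric (fun y => (hF.differentiable (by simp) y).hasFDerivAt) hq v w

lemma swap_pt_px {v : ℝ → ℝ → ℝ} (hv : ContDiff ℝ (⊤ : ℕ∞) (uncurry v)) (t x : ℝ) :
    pt (px v) t x = px (pt v) t x := by
  have h1 : pt (px v) t x
      = fderiv ℝ (fun p : ℝ × ℝ => fderiv ℝ (uncurry v) p (0, 1)) (t, x) (1, 0) := by
    have he : (fun s => px v s x) = fun s => fderiv ℝ (uncurry v) (s, x) (0, 1) := by
      funext s; exact px_eq' hv s x
    rw [pt]; rw [he]
    exact (hasDerivAt_fst' (contDiff_fderiv_apply hv _) t x).deriv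
  have h2 : px (pt v) t x
      = fderiv ℝ (fun p : ℝ × ℝ => fderiv ℝ (uncurry v) p (1, 0)) (t, x) (0, 1) := by
    have he : (fun y => pt v t y) = fun y => fderiv ℝ (uncurry v) (t, y) (1, 0) := by
      funext y; exact pt_eq' hv t y
    rw [px]; rw [he]
    exact (hasDerivAt_snd' (contDiff_fderiv_apply hv _) t x).deriv
  rw [h1, h2, fderiv_apply_swap hv]

end helpers

set_option maxHeartbeats 1000000 in
/-- The composed Cole–Hopf/Miura transform `ψ = u_xx/u` of a
solution of `u_t = u_xxx − (3/u) u_x u_xx` solves the KdV equation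
`ψ_t = ψ_xxx − 6 ψ ψ_x`. -/
theorem stmt_8 (u : ℝ → ℝ → ℝ) (hu : ContDiff ℝ (⊤ : ℕ∞) (Function.uncurry u))
    (hu0 : ∀ t x, u t x ≠ 0)
    (heq : ∀ t x, pt u t x =
      px (px (px u)) t x - (3 / u t x) * px u t x * px (px u) t x) :
    ∀ t x, pt (fun t x => px (px u) t x / u t x) t x =
      px (px (px (fun t x => px (px u) t x / u t x))) t x
      - 6 * (px (px u) t x / u t x)
          * px (fun t x => px (px u) t x / u t x) t x := by
  have h1 : ContDiff ℝ (⊤ : ℕ∞) (uncurry (px u)) := contDiff_px hu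
  have h2 : ContDiff ℝ (⊤ : ℕ∞) (uncurry (px (px u))) := contDiff_px h1
  have h3 : ContDiff ℝ (⊤ : ℕ∞) (uncurry (px (px (px u)))) := contDiff_px h2
  have h4 : ContDiff ℝ (⊤ : ℕ∞) (uncurry (px (px (px (px u))))) := contDiff_px h3
  set u1 := px u with hu1
  set u2 := px u1 with hu2
  set u3 := px u2 with hu3
  set u4 := px u3 with hu4
  set u5 := px u4 with hu5
  set ψ : ℝ → ℝ → ℝ := fun t x => u2 t x / u t x with hψ
  -- the time derivative of u, as a space-function
  set E : ℝ → ℝ → ℝ := fun s y => u3 s y - 3 / u s y * u1 s y * u2 s y with hE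
  set F1 : ℝ → ℝ → ℝ := fun s y => (u4 s y * u s y ^ 2 + 3 * u1 s y ^ 2 * u2 s y
      - 3 * u2 s y ^ 2 * u s y - 3 * u1 s y * u3 s y * u s y) / u s y ^ 2 with hF1
  set F2 : ℝ → ℝ → ℝ := fun s y => (u5 s y * u s y ^ 3 - 9 * u2 s y * u3 s y * u s y ^ 2
      - 3 * u1 s y * u4 s y * u s y ^ 2 + 9 * u1 s y * u2 s y ^ 2 * u s y
      + 6 * u1 s y ^ 2 * u3 s y * u s y - 6 * u1 s y ^ 3 * u2 s y) / u s y ^ 3 with hF2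
  set P1 : ℝ → ℝ → ℝ := fun s y => (u3 s y * u s y - u1 s y * u2 s y) / u s y ^ 2 with hP1
  set P2 : ℝ → ℝ → ℝ := fun s y => (u4 s y * u s y ^ 2 - 2 * u1 s y * u3 s y * u s y
      - u2 s y ^ 2 * u s y + 2 * u1 s y ^ 2 * u2 s y) / u s y ^ 3 with hP2
  set P3 : ℝ → ℝ → ℝ := fun s y => (u5 s y * u s y ^ 3 - 3 * u1 s y * u4 s y * u s y ^ 2
      - 4 * u2 s y * u3 s y * u s y ^ 2 + 6 * u1 s y ^ 2 * u3 s y * u s y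
      + 6 * u1 s y * u2 s y ^ 2 * u s y - 6 * u1 s y ^ 3 * u2 s y) / u s y ^ 4 with hP3
  have hdF1 : ∀ s y, HasDerivAt (fun z => E s z) (F1 s y) y := by
    intro s y
    have h := (hasDerivAt_px h3 s y).sub
      ((((hasDerivAt_const y (3 : ℝ)).div (hasDerivAt_px hu s y) (hu0 s y)).mul
        (hasDerivAt_px h1 s y)).mul (hasDerivAt_px h2 s y))
    refine h.congr_deriv (Eq.symm ?_)
    simp only [hF1, Pi.add_apply, Pi.sub_apply, Pi.mul_apply, Pi.div_apply, Pi.pow_apply]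
    rw [div_eq_iff (pow_ne_zero 2 (hu0 s y))]
    field_simp [hu0 s y]
    ring
  have hdF2 : ∀ s y, HasDerivAt (fun z => F1 s z) (F2 s y) y := by
    intro s y
    have h := (((((hasDerivAt_px h4 s y).mul ((hasDerivAt_px hu s y).pow 2)).add
        ((((hasDerivAt_px h1 s y).pow 2).const_mul 3).mul (hasDerivAt_px h2 s y))).sub
        ((((hasDerivAt_px h2 s y).pow 2).const_mul 3).mul (hasDerivAt_px hu s y))).sub
        ((((hasDerivAt_px h1 s y).const_mul 3).mul (hasDerivAt_px h3 s y)).mul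
          (hasDerivAt_px hu s y))).div
        ((hasDerivAt_px hu s y).pow 2) (pow_ne_zero 2 (hu0 s y))
    refine h.congr_deriv (Eq.symm ?_)
    simp only [hF2, Pi.add_apply, Pi.sub_apply, Pi.mul_apply, Pi.div_apply, Pi.pow_apply]
    rw [div_eq_iff (pow_ne_zero 3 (hu0 s y))]
    field_simp [hu0 s y]
    ring
  have hdP1 : ∀ s y, HasDerivAt (fun z => ψ s z) (P1 s y) y := by
    intro s y
    have h := (hasDerivAt_px h2 s y).div (hasDerivAt_px hu s y) (hu0 s y)
    refine h.congr_deriv (Eq.symm ?_)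
    simp only [hP1, Pi.add_apply, Pi.sub_apply, Pi.mul_apply, Pi.div_apply, Pi.pow_apply]
    rw [div_eq_iff (pow_ne_zero 2 (hu0 s y))]
    field_simp [hu0 s y]
    ring
  have hdP2 : ∀ s y, HasDerivAt (fun z => P1 s z) (P2 s y) y := by
    intro s y
    have h := (((hasDerivAt_px h3 s y).mul (hasDerivAt_px hu s y)).sub
        ((hasDerivAt_px h1 s y).mul (hasDerivAt_px h2 s y))).div
        ((hasDerivAt_px hu s y).pow 2) (pow_ne_zero 2 (hu0 s y))
    refine h.congr_deriv (Eq.symm ?_)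
    simp only [hP2, Pi.add_apply, Pi.sub_apply, Pi.mul_apply, Pi.div_apply, Pi.pow_apply]
    rw [div_eq_iff (pow_ne_zero 3 (hu0 s y))]
    field_simp [hu0 s y]
    ring
  have hdP3 : ∀ s y, HasDerivAt (fun z => P2 s z) (P3 s y) y := by
    intro s y
    have h := (((((hasDerivAt_px h4 s y).mul ((hasDerivAt_px hu s y).pow 2)).sub
        ((((hasDerivAt_px h1 s y).const_mul 2).mul (hasDerivAt_px h3 s y)).mul
          (hasDerivAt_px hu s y))).sub
        (((hasDerivAt_px h2 s y).pow 2).mul (hasDerivAt_px hu s y))).add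
        (((hasDerivAt_px h1 s y).pow 2).const_mul 2 |>.mul (hasDerivAt_px h2 s y))).div
        ((hasDerivAt_px hu s y).pow 3) (pow_ne_zero 3 (hu0 s y))
    refine h.congr_deriv (Eq.symm ?_)
    simp only [hP3, Pi.add_apply, Pi.sub_apply, Pi.mul_apply, Pi.div_apply, Pi.pow_apply]
    rw [div_eq_iff (pow_ne_zero 4 (hu0 s y))]
    field_simp [hu0 s y]
    ring
  -- px of (pt u) equals F1
  have hptux : ∀ s y, px (pt u) s y = F1 s y := by
    intro s y
    have he : (fun z => pt u s z) = fun z => E s z := by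
      funext z; exact heq s z
    rw [px]; rw [he]
    exact (hdF1 s y).deriv
  -- pt u2 equals F2 at (t,x)
  have hptu2 : ∀ t x, pt u2 t x = F2 t x := by
    intro t x
    rw [hu2, swap_pt_px h1 t x]
    have he : (fun y => pt u1 t y) = fun y => px (pt u) t y := by
      funext y; rw [hu1, swap_pt_px hu t y]
    rw [px]; rw [he]
    have he2 : (fun y => px (pt u) t y) = fun y => F1 t y := by
      funext y; exact hptux t y
    rw [he2]
    exact (hdF2 t x).deriv
  -- px ψ = P1, px px ψ = P2, px px px ψ = P3
  have hψ1 : ∀ s y, px ψ s y = P1 s y := fun s y => (hdP1 s y).deriv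
  have hψ2 : ∀ s y, px (px ψ) s y = P2 s y := by
    intro s y
    have he : (fun z => px ψ s z) = fun z => P1 s z := by funext z; exact hψ1 s z
    rw [px]; rw [he]
    exact (hdP2 s y).deriv
  have hψ3 : ∀ s y, px (px (px ψ)) s y = P3 s y := by
    intro s y
    have he : (fun z => px (px ψ) s z) = fun z => P2 s z := by funext z; exact hψ2 s z
    rw [px]; rw [he]
    exact (hdP3 s y).deriv
  intro t x
  have hψt : pt ψ t x = (pt u2 t x * u t x - u2 t x * pt u t x) / u t x ^ 2 :=
    ((hasDerivAt_pt h2 t x).div (hasDerivAt_pt hu t x) (hu0 t x)).deriv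
  rw [hψt, hψ3, hψ1, hptu2, heq t x]
  simp only [hF2, hP3, hP1]
  field_simp [hu0 t x]
  ring
end

section
/- Let β ∈ ℝ and let u : ℝ × ℝ → ℝ be smooth with u(t,x) ≠ 0 for all (t,x), and suppose u satisfies u_t = u_xxx + (β/u²) u_x³ at every point. Then w(t,x) = u_x(t,x)/u(t,x) satisfies w_t = w_xxx + (3/2)(w²)_xx + (β+1)(w³)_x at every point, where (w²)_xx denotes the second x-derivative of w² and (w³)_x the first x-derivative of w³. -/
lemma px_eq_fderiv (u : ℝ → ℝ → ℝ) (hu : ContDiff ℝ (⊤ : ℕ∞) (Function.uncurry u)) (t x : ℝ) :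
    px u t x = fderiv ℝ (Function.uncurry u) (t, x) (0, 1) := by
  have h2 : HasFDerivAt (fun y : ℝ => ((t, y) : ℝ × ℝ))
      (((0 : ℝ →L[ℝ] ℝ)).prod (ContinuousLinearMap.id ℝ ℝ)) x :=
    HasFDerivAt.prodMk (hasFDerivAt_const t x) (hasFDerivAt_id x)
  have h3 := ((hu.differentiable (by simp) (t, x)).hasFDerivAt).comp x h2
  have := h3.hasDerivAt.deriv
  simpa [px, Function.comp_def] using this

lemma pt_eq_fderiv (u : ℝ → ℝ → ℝ) (hu : ContDiff ℝ (⊤ : ℕ∞) (Function.uncurry u)) (t x : ℝ) :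
    pt u t x = fderiv ℝ (Function.uncurry u) (t, x) (1, 0) := by
  have h2 : HasFDerivAt (fun s : ℝ => ((s, x) : ℝ × ℝ))
      ((ContinuousLinearMap.id ℝ ℝ).prod (0 : ℝ →L[ℝ] ℝ)) t :=
    HasFDerivAt.prodMk (hasFDerivAt_id t) (hasFDerivAt_const x t)
  have h3 := ((hu.differentiable (by simp) (t, x)).hasFDerivAt).comp t h2
  have := h3.hasDerivAt.deriv
  simpa [pt, Function.comp_def] using this

lemma contDiff_uncurry_px (u : ℝ → ℝ → ℝ) (hu : ContDiff ℝ (⊤ : ℕ∞) (Function.uncurry u)) :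
    ContDiff ℝ (⊤ : ℕ∞) (Function.uncurry (px u)) := by
  have h : Function.uncurry (px u) = fun p : ℝ × ℝ => fderiv ℝ (Function.uncurry u) p (0, 1) := by
    funext p
    exact px_eq_fderiv u hu p.1 p.2
  rw [h]
  exact (hu.fderiv_right (by simp)).clm_apply contDiff_const

lemma contDiff_uncurry_pt (u : ℝ → ℝ → ℝ) (hu : ContDiff ℝ (⊤ : ℕ∞) (Function.uncurry u)) :
    ContDiff ℝ (⊤ : ℕ∞) (Function.uncurry (pt u)) := by
  have h : Function.uncurry (pt u) = fun p : ℝ × ℝ => fderiv ℝ (Function.uncurry u) p (1, 0) := by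
    funext p
    exact pt_eq_fderiv u hu p.1 p.2
  rw [h]
  exact (hu.fderiv_right (by simp)).clm_apply contDiff_const

lemma fderiv_apply_dir (u : ℝ → ℝ → ℝ) (hu : ContDiff ℝ (⊤ : ℕ∞) (Function.uncurry u))
    (v p w : ℝ × ℝ) :
    fderiv ℝ (fun q => fderiv ℝ (Function.uncurry u) q v) p w
      = fderiv ℝ (fderiv ℝ (Function.uncurry u)) p w v := by
  have hd : DifferentiableAt ℝ (fderiv ℝ (Function.uncurry u)) p :=
    ((hu.fderiv_right (m := 1) (WithTop.coe_le_coe.mpr le_top)).differentiable one_ne_zero) p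
  rw [fderiv_clm_apply hd (differentiableAt_const v)]
  simp

lemma pt_px_comm (u : ℝ → ℝ → ℝ) (hu : ContDiff ℝ (⊤ : ℕ∞) (Function.uncurry u)) (t x : ℝ) :
    pt (px u) t x = px (pt u) t x := by
  have hsymm : IsSymmSndFDerivAt ℝ (Function.uncurry u) (t, x) :=
    hu.contDiffAt.isSymmSndFDerivAt (by rw [minSmoothness_of_isRCLikeNormedField]; exact WithTop.coe_le_coe.mpr le_top)
  have h1 : pt (px u) t x = fderiv ℝ (fderiv ℝ (Function.uncurry u)) (t, x) (1, 0) (0, 1) := by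
    rw [pt_eq_fderiv (px u) (contDiff_uncurry_px u hu) t x]
    have : Function.uncurry (px u)
        = fun p : ℝ × ℝ => fderiv ℝ (Function.uncurry u) p (0, 1) := by
      funext p; exact px_eq_fderiv u hu p.1 p.2
    rw [this, fderiv_apply_dir u hu]
  have h2 : px (pt u) t x = fderiv ℝ (fderiv ℝ (Function.uncurry u)) (t, x) (0, 1) (1, 0) := by
    rw [px_eq_fderiv (pt u) (contDiff_uncurry_pt u hu) t x]
    have : Function.uncurry (pt u)
        = fun p : ℝ × ℝ => fderiv ℝ (Function.uncurry u) p (1, 0) := by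
      funext p; exact pt_eq_fderiv u hu p.1 p.2
    rw [this, fderiv_apply_dir u hu]
  rw [h1, h2, hsymm (1, 0) (0, 1)]

set_option maxHeartbeats 2000000 in
lemma xside (β : ℝ) (a : ℝ → ℝ) (ha : ContDiff ℝ (⊤ : ℕ∞) a) (h0 : ∀ y, a y ≠ 0) (x : ℝ) :
    deriv (deriv (deriv (fun z => deriv a z / a z))) x
      + 3 / 2 * deriv (deriv (fun z => (deriv a z / a z) ^ 2)) x
      + (β + 1) * deriv (fun z => (deriv a z / a z) ^ 3) x
    = deriv (deriv (deriv (deriv a))) x / a x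
      - deriv a x * deriv (deriv (deriv a)) x / a x ^ 2
      + 3 * β * deriv a x ^ 2 * deriv (deriv a) x / a x ^ 3
      - 3 * β * deriv a x ^ 4 / a x ^ 4 := by
  set b := deriv a with hbdef
  set c := deriv b with hcdef
  set d := deriv c with hddef
  set e := deriv d with hedef
  have ha' : ContDiff ℝ ((⊤ : ℕ∞) : WithTop ℕ∞) a := ha.of_le (by simp)
  have hb : ContDiff ℝ ((⊤ : ℕ∞) : WithTop ℕ∞) b := hbdef ▸ (contDiff_infty_iff_deriv.mp ha').2
  have hc : ContDiff ℝ ((⊤ : ℕ∞) : WithTop ℕ∞) c := hcdef ▸ (contDiff_infty_iff_deriv.mp hb).2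
  have hd : ContDiff ℝ ((⊤ : ℕ∞) : WithTop ℕ∞) d := hddef ▸ (contDiff_infty_iff_deriv.mp hc).2
  have Da : ∀ y, HasDerivAt a (b y) y := fun y => (ha.differentiable (by simp) y).hasDerivAt
  have Db : ∀ y, HasDerivAt b (c y) y := fun y => (hb.differentiable (by simp) y).hasDerivAt
  have Dc : ∀ y, HasDerivAt c (d y) y := fun y => (hc.differentiable (by simp) y).hasDerivAt
  have Dd : ∀ y, HasDerivAt d (e y) y := fun y => (hd.differentiable (by simp) y).hasDerivAt
  have Dg : ∀ y, HasDerivAt (fun z => b z / a z) ((c y * a y - b y * b y) / a y ^ 2) y :=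
    fun y => (Db y).div (Da y) (h0 y)
  have Eg : deriv (fun z => b z / a z) = fun y => (c y * a y - b y * b y) / a y ^ 2 :=
    funext fun y => (Dg y).deriv
  have Dg1 := fun y : ℝ =>
    (((Dc y).fun_mul (Da y)).fun_sub ((Db y).fun_mul (Db y))).fun_div ((Da y).fun_pow 2) (pow_ne_zero 2 (h0 y))
  have Eg1 : deriv (fun z => (c z * a z - b z * b z) / a z ^ 2)
      = fun y => d y / a y - 3 * (b y * c y) / a y ^ 2 + 2 * b y ^ 3 / a y ^ 3 := by
    funext y
    rw [(Dg1 y).deriv]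
    field_simp [h0 y]
    ring
  have D3 := fun y : ℝ =>
    (((Dd y).fun_div (Da y) (h0 y)).fun_sub
      ((((Db y).fun_mul (Dc y)).const_mul 3).fun_div ((Da y).fun_pow 2) (pow_ne_zero 2 (h0 y)))).fun_add
      ((((Db y).fun_pow 3).const_mul 2).fun_div ((Da y).fun_pow 3) (pow_ne_zero 3 (h0 y)))
  have Eg2 : deriv (fun z => (b z / a z) ^ 2)
      = fun y => 2 * (b y * c y) / a y ^ 2 - 2 * b y ^ 3 / a y ^ 3 := by
    funext y
    rw [((Dg y).fun_pow 2).deriv]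
    field_simp [h0 y]
    rw [show (2:ℕ) - 1 = 1 from rfl, pow_one]
    field_simp [h0 y]
    push_cast
    ring
  have D22 := fun y : ℝ =>
    ((((Db y).fun_mul (Dc y)).const_mul 2).fun_div ((Da y).fun_pow 2) (pow_ne_zero 2 (h0 y))).fun_sub
      ((((Db y).fun_pow 3).const_mul 2).fun_div ((Da y).fun_pow 3) (pow_ne_zero 3 (h0 y)))
  have T1 : deriv (deriv (deriv (fun z => b z / a z))) x
      = e x / a x - 4 * (b x * d x) / a x ^ 2 - 3 * c x ^ 2 / a x ^ 2
        + 12 * (b x ^ 2 * c x) / a x ^ 3 - 6 * b x ^ 4 / a x ^ 4 := by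
    rw [Eg, Eg1, (D3 x).deriv]
    obtain ⟨A, hA⟩ : ∃ A, a x = A := ⟨_, rfl⟩
    obtain ⟨B, hB⟩ : ∃ B, b x = B := ⟨_, rfl⟩
    obtain ⟨C, hC⟩ : ∃ C, c x = C := ⟨_, rfl⟩
    obtain ⟨D, hD⟩ : ∃ D, d x = D := ⟨_, rfl⟩
    obtain ⟨E, hE⟩ : ∃ E, e x = E := ⟨_, rfl⟩
    have hA0 : A ≠ 0 := hA ▸ h0 x
    simp only [hA, hB, hC, hD, hE]
    field_simp
    ring
  have T2 : deriv (deriv (fun z => (b z / a z) ^ 2)) x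
      = 2 * c x ^ 2 / a x ^ 2 + 2 * (b x * d x) / a x ^ 2
        - 10 * (b x ^ 2 * c x) / a x ^ 3 + 6 * b x ^ 4 / a x ^ 4 := by
    rw [Eg2, (D22 x).deriv]
    obtain ⟨A, hA⟩ : ∃ A, a x = A := ⟨_, rfl⟩
    obtain ⟨B, hB⟩ : ∃ B, b x = B := ⟨_, rfl⟩
    obtain ⟨C, hC⟩ : ∃ C, c x = C := ⟨_, rfl⟩
    obtain ⟨D, hD⟩ : ∃ D, d x = D := ⟨_, rfl⟩
    obtain ⟨E, hE⟩ : ∃ E, e x = E := ⟨_, rfl⟩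
    have hA0 : A ≠ 0 := hA ▸ h0 x
    simp only [hA, hB, hC, hD, hE]
    field_simp
    ring
  have T3 : deriv (fun z => (b z / a z) ^ 3) x
      = 3 * (b x ^ 2 * c x) / a x ^ 3 - 3 * b x ^ 4 / a x ^ 4 := by
    rw [((Dg x).fun_pow 3).deriv]
    obtain ⟨A, hA⟩ : ∃ A, a x = A := ⟨_, rfl⟩
    obtain ⟨B, hB⟩ : ∃ B, b x = B := ⟨_, rfl⟩
    obtain ⟨C, hC⟩ : ∃ C, c x = C := ⟨_, rfl⟩
    obtain ⟨D, hD⟩ : ∃ D, d x = D := ⟨_, rfl⟩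
    obtain ⟨E, hE⟩ : ∃ E, e x = E := ⟨_, rfl⟩
    have hA0 : A ≠ 0 := hA ▸ h0 x
    simp only [hA, hB, hC, hD, hE]
    push_cast
    field_simp
  rw [T1, T2, T3]
  obtain ⟨A, hA⟩ : ∃ A, a x = A := ⟨_, rfl⟩
  obtain ⟨B, hB⟩ : ∃ B, b x = B := ⟨_, rfl⟩
  obtain ⟨C, hC⟩ : ∃ C, c x = C := ⟨_, rfl⟩
  obtain ⟨D, hD⟩ : ∃ D, d x = D := ⟨_, rfl⟩
  obtain ⟨E, hE⟩ : ∃ E, e x = E := ⟨_, rfl⟩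
  have hA0 : A ≠ 0 := hA ▸ h0 x
  simp only [hA, hB, hC, hD, hE]
  field_simp
  ring

set_option maxHeartbeats 2000000 in
/-- The substitution `w = u_x/u` maps a solution of
`u_t = u_xxx + (β/u²) u_x³` to a solution of
`w_t = w_xxx + (3/2)(w²)_xx + (β+1)(w³)_x`. -/
theorem stmt_9 (β : ℝ)
    (u : ℝ → ℝ → ℝ) (hu : ContDiff ℝ (⊤ : ℕ∞) (Function.uncurry u))
    (hu0 : ∀ t x, u t x ≠ 0)
    (heq : ∀ t x, pt u t x =
      px (px (px u)) t x + (β / (u t x) ^ 2) * (px u t x) ^ 3) :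
    ∀ t x, pt (fun t x => px u t x / u t x) t x =
      px (px (px (fun t x => px u t x / u t x))) t x
      + (3 / 2) * px (px (fun t x => (px u t x / u t x) ^ 2)) t x
      + (β + 1) * px (fun t x => (px u t x / u t x) ^ 3) t x := by
  intro t x
  have ha : ContDiff ℝ (⊤ : ℕ∞) (u t) := hu.comp (contDiff_const.prodMk contDiff_id)
  have ha' : ContDiff ℝ ((⊤ : ℕ∞) : WithTop ℕ∞) (u t) := ha.of_le (by simp)
  have hb : ContDiff ℝ ((⊤ : ℕ∞) : WithTop ℕ∞) (deriv (u t)) :=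
    (contDiff_infty_iff_deriv.mp ha').2
  have hc : ContDiff ℝ ((⊤ : ℕ∞) : WithTop ℕ∞) (deriv (deriv (u t))) :=
    (contDiff_infty_iff_deriv.mp hb).2
  have hd : ContDiff ℝ ((⊤ : ℕ∞) : WithTop ℕ∞) (deriv (deriv (deriv (u t)))) :=
    (contDiff_infty_iff_deriv.mp hc).2
  have Da : ∀ y, HasDerivAt (u t) (deriv (u t) y) y :=
    fun y => (ha.differentiable (by simp) y).hasDerivAt
  have Db : ∀ y, HasDerivAt (deriv (u t)) (deriv (deriv (u t)) y) y :=
    fun y => (hb.differentiable (by simp) y).hasDerivAt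
  have Dd : ∀ y, HasDerivAt (deriv (deriv (deriv (u t))))
      (deriv (deriv (deriv (deriv (u t)))) y) y :=
    fun y => (hd.differentiable (by simp) y).hasDerivAt
  -- time derivative via quotient rule
  have hpxsm := contDiff_uncurry_px u hu
  have Dpxs : HasDerivAt (fun s => px u s x) (pt (px u) t x) t := by
    have hdiff : DifferentiableAt ℝ (fun s => px u s x) t :=
      ((hpxsm.differentiable (by simp)).comp (differentiable_id.prodMk (differentiable_const x))) t
    exact hdiff.hasDerivAt
  have Dus : HasDerivAt (fun s => u s x) (pt u t x) t := by
    have hdiff : DifferentiableAt ℝ (fun s => u s x) t :=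
      ((hu.differentiable (by simp)).comp (differentiable_id.prodMk (differentiable_const x))) t
    exact hdiff.hasDerivAt
  have hLHS : pt (fun t x => px u t x / u t x) t x
      = (pt (px u) t x * u t x - px u t x * pt u t x) / u t x ^ 2 :=
    (Dpxs.div Dus (hu0 t x)).deriv
  have hcomm := pt_px_comm u hu t x
  have hfun : (fun y => pt u t y)
      = fun y => deriv (deriv (deriv (u t))) y + β / u t y ^ 2 * deriv (u t) y ^ 3 :=
    funext fun y => heq t y
  have hptx : px (pt u) t x
      = deriv (fun y => deriv (deriv (deriv (u t))) y + β / u t y ^ 2 * deriv (u t) y ^ 3) x := by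
    show deriv (fun y => pt u t y) x = _
    rw [hfun]
  have Dlast := (Dd x).fun_add
    (((hasDerivAt_const x β).fun_div ((Da x).fun_pow 2) (pow_ne_zero 2 (hu0 t x))).fun_mul ((Db x).fun_pow 3))
  have hptu : pt u t x
      = deriv (deriv (deriv (u t))) x + β / u t x ^ 2 * deriv (u t) x ^ 3 := heq t x
  have hpxu : px u t x = deriv (u t) x := rfl
  have key : pt (fun t x => px u t x / u t x) t x
      = deriv (deriv (deriv (deriv (u t)))) x / u t x
        - deriv (u t) x * deriv (deriv (deriv (u t))) x / u t x ^ 2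
        + 3 * β * deriv (u t) x ^ 2 * deriv (deriv (u t)) x / u t x ^ 3
        - 3 * β * deriv (u t) x ^ 4 / u t x ^ 4 := by
    rw [hLHS, hcomm, hptx, Dlast.deriv, hptu, hpxu]
    obtain ⟨A, hA⟩ : ∃ A, u t x = A := ⟨_, rfl⟩
    obtain ⟨B, hB⟩ : ∃ B, deriv (u t) x = B := ⟨_, rfl⟩
    obtain ⟨C, hC⟩ : ∃ C, deriv (deriv (u t)) x = C := ⟨_, rfl⟩
    obtain ⟨D, hD⟩ : ∃ D, deriv (deriv (deriv (u t))) x = D := ⟨_, rfl⟩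
    obtain ⟨E, hE⟩ : ∃ E, deriv (deriv (deriv (deriv (u t)))) x = E := ⟨_, rfl⟩
    have hA0 : A ≠ 0 := hA ▸ hu0 t x
    simp only [hA, hB, hC, hD, hE]
    push_cast
    field_simp
    ring
  have hx : px (px (px (fun t x => px u t x / u t x))) t x
      + 3 / 2 * px (px (fun t x => (px u t x / u t x) ^ 2)) t x
      + (β + 1) * px (fun t x => (px u t x / u t x) ^ 3) t x
      = deriv (deriv (deriv (deriv (u t)))) x / u t x
        - deriv (u t) x * deriv (deriv (deriv (u t))) x / u t x ^ 2
        + 3 * β * deriv (u t) x ^ 2 * deriv (deriv (u t)) x / u t x ^ 3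
        - 3 * β * deriv (u t) x ^ 4 / u t x ^ 4 :=
    xside β (u t) ha (hu0 t) x
  rw [key, hx]
end

section
/- Let u : ℝ × ℝ → ℝ be smooth with u(t,x) > 0 for all (t,x), and suppose u satisfies u_t = u_xxx − (3/4)(2 u_x u_xx / u − u_x³ / u²) at every point. Then w(t,x) = √(u(t,x)) satisfies the linear equation w_t = w_xxx at every point. -/
open scoped ContDiff


/-- The equation `u_t = u_xxx − (3/4)(2 u_x u_xx/u − u_x³/u²)`
is linearized to `w_t = w_xxx` by `w = √u`. -/
theorem stmt_10 (u : ℝ → ℝ → ℝ) (hu : ContDiff ℝ (⊤ : ℕ∞) (Function.uncurry u))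
    (hupos : ∀ t x, 0 < u t x)
    (heq : ∀ t x, pt u t x =
      px (px (px u)) t x
      - (3 / 4) * (2 * px u t x * px (px u) t x / u t x
          - (px u t x) ^ 3 / (u t x) ^ 2)) :
    ∀ t x, pt (fun t x => Real.sqrt (u t x)) t x =
      px (px (px (fun t x => Real.sqrt (u t x)))) t x := by
  intro t x
  -- one-variable space slice
  set g : ℝ → ℝ := fun y => u t y with hg_def
  set s : ℝ → ℝ := fun y => Real.sqrt (u t y) with hs_def
  have hg : ContDiff ℝ (⊤ : ℕ∞) g := hu.comp (contDiff_const.prodMk contDiff_id)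
  have hs : ContDiff ℝ ∞ s := by
    rw [contDiff_iff_contDiffAt]
    intro y
    exact (Real.contDiffAt_sqrt (hupos t y).ne').comp y (hg.of_le (by simp)).contDiffAt
  have hsq : ∀ y, s y ^ 2 = g y := fun y => Real.sq_sqrt (hupos t y).le
  have hgs : g = fun y => s y ^ 2 := funext fun y => (hsq y).symm
  have hsd : Differentiable ℝ s := (contDiff_infty_iff_deriv.mp hs).1
  have hs1 : ContDiff ℝ ∞ (deriv s) := (contDiff_infty_iff_deriv.mp hs).2
  have hs1d : Differentiable ℝ (deriv s) := (contDiff_infty_iff_deriv.mp hs1).1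
  have hs2 : ContDiff ℝ ∞ (deriv (deriv s)) := (contDiff_infty_iff_deriv.mp hs1).2
  have hs2d : Differentiable ℝ (deriv (deriv s)) := (contDiff_infty_iff_deriv.mp hs2).1
  have h1 : deriv g = fun y => 2 * s y * deriv s y := by
    funext y
    rw [hgs]
    have := ((hsd y).hasDerivAt.pow 2).deriv
    simp at this; exact this
  have h2 : deriv (deriv g) = fun y => 2 * (deriv s y) ^ 2 + 2 * s y * deriv (deriv s) y := by
    funext y
    rw [h1]
    have h := (((hsd y).hasDerivAt.const_mul 2).mul (hs1d y).hasDerivAt).deriv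
    exact h.trans (by ring)
  have h3 : deriv (deriv (deriv g)) x
      = 6 * deriv s x * deriv (deriv s) x + 2 * s x * deriv (deriv (deriv s)) x := by
    rw [h2]
    have ha : HasDerivAt (fun y => 2 * (deriv s y) ^ 2)
        (2 * (2 * deriv s x ^ 1 * deriv (deriv s) x)) x :=
      ((hs1d x).hasDerivAt.pow 2).const_mul 2
    have hb : HasDerivAt (fun y => 2 * s y * deriv (deriv s) y)
        (2 * deriv s x * deriv (deriv s) x + 2 * s x * deriv (deriv (deriv s)) x) x :=
      ((hsd x).hasDerivAt.const_mul 2).mul (hs2d x).hasDerivAt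
    have := (ha.add hb).deriv
    exact this.trans (by ring)
  -- time slice
  set h : ℝ → ℝ := fun τ => u τ x with hh_def
  set sh : ℝ → ℝ := fun τ => Real.sqrt (u τ x) with hsh_def
  have hh : ContDiff ℝ (⊤ : ℕ∞) h := hu.comp (contDiff_id.prodMk contDiff_const)
  have hshc : ContDiff ℝ ∞ sh := by
    rw [contDiff_iff_contDiffAt]
    intro τ
    exact (Real.contDiffAt_sqrt (hupos τ x).ne').comp τ (hh.of_le (by simp)).contDiffAt
  have hshd : Differentiable ℝ sh := (contDiff_infty_iff_deriv.mp hshc).1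
  have ht1 : deriv h t = 2 * sh t * deriv sh t := by
    have hhs : h = fun τ => sh τ ^ 2 :=
      funext fun τ => (Real.sq_sqrt (hupos τ x).le).symm
    rw [hhs]
    have := ((hshd t).hasDerivAt.pow 2).deriv
    simp at this; exact this
  -- the PDE at (t,x) in slice form
  have key := heq t x
  simp only [pt, px] at key
  have keq : deriv h t = deriv (deriv (deriv g)) x
      - 3 / 4 * (2 * deriv g x * deriv (deriv g) x / g x - (deriv g x) ^ 3 / (g x) ^ 2) := key
  -- abbreviations
  set a := s x with ha_def
  set b := deriv s x
  set c := deriv (deriv s) x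
  set d := deriv (deriv (deriv s)) x
  set e := deriv sh t
  have hax : (0:ℝ) < a := Real.sqrt_pos.mpr (hupos t x)
  have hsx : sh t = a := rfl
  have hgx : g x = a ^ 2 := (hsq x).symm
  have hg1 : deriv g x = 2 * a * b := by rw [h1]
  have hg2 : deriv (deriv g) x = 2 * b ^ 2 + 2 * a * c := by rw [h2]
  rw [ht1, hsx, h3, hg1, hg2, hgx] at keq
  -- now keq : 2*a*e = 6*b*c + 2*a*d - 3/4*(2*(2*a*b)*(2*b^2+2*a*c)/a^2 - (2*a*b)^3/(a^2)^2)
  have hkey : e = d := by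
    have ha' : a ≠ 0 := hax.ne'
    field_simp at keq
    have h8 : e * (8 * a ^ 7) = d * (8 * a ^ 7) := by linear_combination a ^ 5 * keq
    exact mul_right_cancel₀ (by positivity) h8
  -- conclude: goal is deriv sh t = deriv (deriv (deriv s)) x
  show deriv (fun τ => Real.sqrt (u τ x)) t
      = deriv (fun y => deriv (fun y => deriv (fun y => Real.sqrt (u t y)) y) y) x
  exact hkey
end

section
/- Let u : ℝ × ℝ → ℝ be smooth with u_x(t,x) > 0 for all (t,x), and suppose u satisfies u_t = u_xxx − (3/4) u_x⁻¹ u_xx² at every point. Then w(t,x) = √(u_x(t,x)) satisfies the linear equation w_t = w_xxx at every point. -/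
noncomputable def DX (G : ℝ × ℝ → ℝ) : ℝ × ℝ → ℝ := fun p => fderiv ℝ G p (0, 1)
noncomputable def DT (G : ℝ × ℝ → ℝ) : ℝ × ℝ → ℝ := fun p => fderiv ℝ G p (1, 0)

lemma lineX (G : ℝ × ℝ → ℝ) (hG : ContDiff ℝ (⊤ : ℕ∞) G) (t x : ℝ) :
    HasDerivAt (fun y => G (t, y)) (DX G (t, x)) x := by
  have h1 : HasDerivAt (fun y : ℝ => ((t, y) : ℝ × ℝ)) (0, 1) x :=
    HasDerivAt.prodMk (hasDerivAt_const x t) (hasDerivAt_id x)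
  exact (hG.differentiable (by simp) (t, x)).hasFDerivAt.comp_hasDerivAt x h1

lemma lineT (G : ℝ × ℝ → ℝ) (hG : ContDiff ℝ (⊤ : ℕ∞) G) (t x : ℝ) :
    HasDerivAt (fun s => G (s, x)) (DT G (t, x)) t := by
  have h1 : HasDerivAt (fun s : ℝ => ((s, x) : ℝ × ℝ)) (1, 0) t :=
    HasDerivAt.prodMk (hasDerivAt_id t) (hasDerivAt_const t x)
  exact (hG.differentiable (by simp) (t, x)).hasFDerivAt.comp_hasDerivAt t h1

lemma contDiff_DX (G : ℝ × ℝ → ℝ) (hG : ContDiff ℝ (⊤ : ℕ∞) G) : ContDiff ℝ (⊤ : ℕ∞) (DX G) :=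
  (hG.fderiv_right (by simp)).clm_apply contDiff_const

lemma contDiff_DT (G : ℝ × ℝ → ℝ) (hG : ContDiff ℝ (⊤ : ℕ∞) G) : ContDiff ℝ (⊤ : ℕ∞) (DT G) :=
  (hG.fderiv_right (by simp)).clm_apply contDiff_const

lemma DT_DX (G : ℝ × ℝ → ℝ) (hG : ContDiff ℝ (⊤ : ℕ∞) G) (p : ℝ × ℝ) :
    DT (DX G) p = DX (DT G) p := by
  have hdiff : ∀ q, HasFDerivAt G (fderiv ℝ G q) q := fun q =>
    (hG.differentiable (by simp) q).hasFDerivAt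
  have h2 : HasFDerivAt (fderiv ℝ G) (fderiv ℝ (fderiv ℝ G) p) p :=
    ((hG.fderiv_right (m := 1) (WithTop.coe_le_coe.mpr le_top)).differentiable one_ne_zero p).hasFDerivAt
  have hsymm := second_derivative_symmetric hdiff h2 (1, 0) (0, 1)
  have hx : HasFDerivAt (DX G)
      ((fderiv ℝ G p).comp 0 + (fderiv ℝ (fderiv ℝ G) p).flip (0, 1)) p :=
    h2.clm_apply (hasFDerivAt_const ((0 : ℝ), (1 : ℝ)) p)
  have ht : HasFDerivAt (DT G)
      ((fderiv ℝ G p).comp 0 + (fderiv ℝ (fderiv ℝ G) p).flip (1, 0)) p :=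
    h2.clm_apply (hasFDerivAt_const ((1 : ℝ), (0 : ℝ)) p)
  show fderiv ℝ (DX G) p (1, 0) = fderiv ℝ (DT G) p (0, 1)
  rw [hx.fderiv, ht.fderiv]
  simpa using hsymm


/-- The nonlocal transformation `w = √(u_x)` maps a solution of
`u_t = u_xxx − (3/4) u_x⁻¹ u_xx²` to a solution of the linear KdV equation
`w_t = w_xxx`. -/
theorem stmt_12 (u : ℝ → ℝ → ℝ) (hu : ContDiff ℝ (⊤ : ℕ∞) (Function.uncurry u))
    (hux : ∀ t x, 0 < px u t x)
    (heq : ∀ t x, pt u t x =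
      px (px (px u)) t x - (3 / 4) * (px u t x)⁻¹ * (px (px u) t x) ^ 2) :
    ∀ t x, pt (fun t x => Real.sqrt (px u t x)) t x =
      px (px (px (fun t x => Real.sqrt (px u t x)))) t x := by
  have hF : ContDiff ℝ (⊤ : ℕ∞) (Function.uncurry u) := hu
  set F : ℝ × ℝ → ℝ := Function.uncurry u with hFdef
  set A : ℝ × ℝ → ℝ := DX F with hAdef
  have hA : ContDiff ℝ (⊤ : ℕ∞) A := contDiff_DX F hF
  set B : ℝ × ℝ → ℝ := DX A with hBdef
  have hB : ContDiff ℝ (⊤ : ℕ∞) B := contDiff_DX A hA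
  set C : ℝ × ℝ → ℝ := DX B with hCdef
  have hC : ContDiff ℝ (⊤ : ℕ∞) C := contDiff_DX B hB
  set D : ℝ × ℝ → ℝ := DX C with hDdef
  have hTF : ContDiff ℝ (⊤ : ℕ∞) (DT F) := contDiff_DT F hF
  -- identifications of iterated partials
  have hpx : ∀ t x, px u t x = A (t, x) := fun t x => (lineX F hF t x).deriv
  have hpxx : ∀ t x, px (px u) t x = B (t, x) := by
    intro t x
    show deriv (fun y => px u t y) x = B (t, x)
    rw [funext fun y => hpx t y]
    exact (lineX A hA t x).deriv
  have hpxxx : ∀ t x, px (px (px u)) t x = C (t, x) := by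
    intro t x
    show deriv (fun y => px (px u) t y) x = C (t, x)
    rw [funext fun y => hpxx t y]
    exact (lineX B hB t x).deriv
  have hpt : ∀ t x, pt u t x = DT F (t, x) := fun t x => (lineT F hF t x).deriv
  have hApos : ∀ t x : ℝ, 0 < A (t, x) := fun t x => hpx t x ▸ hux t x
  have lA : ∀ t x : ℝ, HasDerivAt (fun y => A (t, y)) (B (t, x)) x := fun t x => lineX A hA t x
  have lB : ∀ t x : ℝ, HasDerivAt (fun y => B (t, y)) (C (t, x)) x := fun t x => lineX B hB t x
  have lC : ∀ t x : ℝ, HasDerivAt (fun y => C (t, y)) (D (t, x)) x := fun t x => lineX C hC t x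
  have hs0 : ∀ t x : ℝ, Real.sqrt (A (t, x)) ≠ 0 := fun t x =>
    (Real.sqrt_pos.mpr (hApos t x)).ne'
  intro t x
  -- sqrt line derivative
  have hsq : ∀ t x : ℝ, HasDerivAt (fun y => Real.sqrt (A (t, y)))
      (1 / (2 * Real.sqrt (A (t, x))) * B (t, x)) x := fun t x =>
    (Real.hasDerivAt_sqrt (hApos t x).ne').comp x (lA t x)
  -- first x-derivative of w
  have hpxw : ∀ t x : ℝ, px (fun t x => Real.sqrt (px u t x)) t x =
      B (t, x) / (2 * Real.sqrt (A (t, x))) := by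
    intro t x
    show deriv (fun y => Real.sqrt (px u t y)) x = _
    rw [funext fun y : ℝ => congrArg Real.sqrt (hpx t y), (hsq t x).deriv]
    ring
  -- second x-derivative of w
  have hW2 : ∀ t x : ℝ, HasDerivAt (fun y => B (t, y) / (2 * Real.sqrt (A (t, y))))
      (C (t, x) / (2 * Real.sqrt (A (t, x))) -
        (B (t, x)) ^ 2 / (4 * A (t, x) * Real.sqrt (A (t, x)))) x := by
    intro t x
    have hden : HasDerivAt (fun y => 2 * Real.sqrt (A (t, y)))
        (2 * (1 / (2 * Real.sqrt (A (t, x))) * B (t, x))) x := (hsq t x).const_mul 2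
    have h := (lB t x).div hden (mul_ne_zero two_ne_zero (hs0 t x))
    refine h.congr_deriv ?_
    have ha : A (t, x) = Real.sqrt (A (t, x)) ^ 2 := (Real.sq_sqrt (hApos t x).le).symm
    set s := Real.sqrt (A (t, x)) with hsdef
    rw [ha]
    have hs : s ≠ 0 := hs0 t x
    field_simp
    ring
  have hpxxw : ∀ t x : ℝ, px (px (fun t x => Real.sqrt (px u t x))) t x =
      C (t, x) / (2 * Real.sqrt (A (t, x))) -
        (B (t, x)) ^ 2 / (4 * A (t, x) * Real.sqrt (A (t, x))) := by
    intro t x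
    show deriv (fun y => px (fun t x => Real.sqrt (px u t x)) t y) x = _
    rw [funext fun y : ℝ => hpxw t y]
    exact (hW2 t x).deriv
  -- third x-derivative of w
  have hW3 : HasDerivAt (fun y => C (t, y) / (2 * Real.sqrt (A (t, y))) -
        (B (t, y)) ^ 2 / (4 * A (t, y) * Real.sqrt (A (t, y))))
      (D (t, x) / (2 * Real.sqrt (A (t, x))) -
        3 * B (t, x) * C (t, x) / (4 * A (t, x) * Real.sqrt (A (t, x))) +
        3 * (B (t, x)) ^ 3 / (8 * (A (t, x)) ^ 2 * Real.sqrt (A (t, x)))) x := by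
    have hden1 : HasDerivAt (fun y => 2 * Real.sqrt (A (t, y)))
        (2 * (1 / (2 * Real.sqrt (A (t, x))) * B (t, x))) x := (hsq t x).const_mul 2
    have hterm1 := (lC t x).div hden1 (mul_ne_zero two_ne_zero (hs0 t x))
    have hnum2 := (lB t x).pow 2
    have hden2 : HasDerivAt (fun y => 4 * A (t, y) * Real.sqrt (A (t, y)))
        (4 * B (t, x) * Real.sqrt (A (t, x)) +
          4 * A (t, x) * (1 / (2 * Real.sqrt (A (t, x))) * B (t, x))) x :=
      ((lA t x).const_mul 4).mul (hsq t x)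
    have hterm2 := hnum2.div hden2
      (mul_ne_zero (mul_ne_zero (by norm_num) (hApos t x).ne') (hs0 t x))
    have h := hterm1.sub hterm2
    refine h.congr_deriv ?_
    simp only [Pi.pow_apply]
    have ha : A (t, x) = Real.sqrt (A (t, x)) ^ 2 := (Real.sq_sqrt (hApos t x).le).symm
    set s := Real.sqrt (A (t, x)) with hsdef
    rw [ha]
    have hs : s ≠ 0 := hs0 t x
    field_simp
    ring
  have hR : px (px (px (fun t x => Real.sqrt (px u t x)))) t x =
      D (t, x) / (2 * Real.sqrt (A (t, x))) -
        3 * B (t, x) * C (t, x) / (4 * A (t, x) * Real.sqrt (A (t, x))) +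
        3 * (B (t, x)) ^ 3 / (8 * (A (t, x)) ^ 2 * Real.sqrt (A (t, x))) := by
    show deriv (fun y => px (px (fun t x => Real.sqrt (px u t x))) t y) x = _
    rw [funext fun y : ℝ => hpxxw t y]
    exact hW3.deriv
  -- time derivative of w
  have hL : pt (fun t x => Real.sqrt (px u t x)) t x =
      1 / (2 * Real.sqrt (A (t, x))) * DT A (t, x) := by
    show deriv (fun s => Real.sqrt (px u s x)) t = _
    rw [funext fun s : ℝ => congrArg Real.sqrt (hpx s x)]
    exact ((Real.hasDerivAt_sqrt (hApos t x).ne').comp t (lineT A hA t x)).deriv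
  -- identify DT A via symmetry of mixed partials and the PDE
  have hswap : DT A (t, x) = DX (DT F) (t, x) := DT_DX F hF (t, x)
  have hE : HasDerivAt (fun y => DT F (t, y)) (DX (DT F) (t, x)) x := lineX (DT F) hTF t x
  have hfe : (fun y => DT F (t, y)) =
      (fun y => C (t, y) - 3 / 4 * (A (t, y))⁻¹ * (B (t, y)) ^ 2) := by
    funext y
    rw [← hpt, heq, hpx, hpxx, hpxxx]
  rw [hfe] at hE
  have hE' : HasDerivAt (fun y => C (t, y) - 3 / 4 * (A (t, y))⁻¹ * (B (t, y)) ^ 2)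
      (D (t, x) - (3 / 4 * (-(B (t, x)) / A (t, x) ^ 2) * B (t, x) ^ 2 +
        3 / 4 * (A (t, x))⁻¹ * (2 * B (t, x) ^ 1 * C (t, x)))) x := by
    have h1 := ((lA t x).inv (hApos t x).ne').const_mul (3 / 4 : ℝ)
    have h2 := (lB t x).pow 2
    have h := (lC t x).sub (h1.mul h2)
    refine h.congr_deriv ?_
    norm_num
  have hval : DT A (t, x) = D (t, x) - (3 / 4 * (-(B (t, x)) / A (t, x) ^ 2) * B (t, x) ^ 2 +
      3 / 4 * (A (t, x))⁻¹ * (2 * B (t, x) ^ 1 * C (t, x))) := by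
    rw [hswap]; exact hE.unique hE'
  rw [hL, hR, hval]
  have ha : A (t, x) = Real.sqrt (A (t, x)) ^ 2 := (Real.sq_sqrt (hApos t x).le).symm
  set s := Real.sqrt (A (t, x)) with hsdef
  rw [ha]
  have hs : s ≠ 0 := hs0 t x
  field_simp
  ring
end

section
/- Let a, b, c, d ∈ ℝ with ad − bc ≠ 0, and let u : ℝ × ℝ → ℝ be smooth with u_x(t,x) ≠ 0 and c·u(t,x) + d ≠ 0 for all (t,x). If u satisfies the Schwarzian-KdV equation u_t = u_xxx − (3/2) u_x⁻¹ u_xx² at every point, then v(t,x) = (a·u(t,x) + b)/(c·u(t,x) + d) also satisfies v_t = v_xxx − (3/2) v_x⁻¹ v_xx² at every point (note v_x = (ad−bc)u_x/(cu+d)² is nowhere zero). -/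
lemma aux1 (a b c d : ℝ) (f : ℝ → ℝ) (hf : Differentiable ℝ f)
    (hE : ∀ y, c * f y + d ≠ 0) (x : ℝ) :
    deriv (fun y => (a * f y + b) / (c * f y + d)) x
      = (a * d - b * c) * deriv f x / (c * f x + d) ^ 2 := by
  have h1 : HasDerivAt (fun y => a * f y + b) (a * deriv f x) x :=
    ((hf x).hasDerivAt.const_mul a).add_const b
  have h2 : HasDerivAt (fun y => c * f y + d) (c * deriv f x) x :=
    ((hf x).hasDerivAt.const_mul c).add_const d
  rw [(h1.fun_div h2 (hE x)).deriv]
  have := hE x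
  field_simp
  ring

lemma aux2 (c d D : ℝ) (f : ℝ → ℝ) (hf : Differentiable ℝ f)
    (hf2 : Differentiable ℝ (deriv f)) (hE : ∀ y, c * f y + d ≠ 0) (x : ℝ) :
    deriv (fun y => D * deriv f y / (c * f y + d) ^ 2) x
      = D * deriv (deriv f) x / (c * f x + d) ^ 2
        - 2 * c * D * (deriv f x) ^ 2 / (c * f x + d) ^ 3 := by
  have h1 : HasDerivAt (fun y => D * deriv f y) (D * deriv (deriv f) x) x :=
    (hf2 x).hasDerivAt.const_mul D
  have hE' : HasDerivAt (fun y => c * f y + d) (c * deriv f x) x :=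
    ((hf x).hasDerivAt.const_mul c).add_const d
  have h2 : HasDerivAt (fun y => (c * f y + d) ^ 2)
      (2 * (c * f x + d) ^ 1 * (c * deriv f x)) x := by
    simpa using hE'.fun_pow 2
  have hne : (c * f x + d) ^ 2 ≠ 0 := pow_ne_zero _ (hE x)
  rw [(h1.fun_div h2 hne).deriv]
  have := hE x
  field_simp

lemma aux3 (c d D : ℝ) (f : ℝ → ℝ) (hf : Differentiable ℝ f)
    (hf2 : Differentiable ℝ (deriv f)) (hf3 : Differentiable ℝ (deriv (deriv f)))
    (hE : ∀ y, c * f y + d ≠ 0) (x : ℝ) :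
    deriv (fun y => D * deriv (deriv f) y / (c * f y + d) ^ 2
        - 2 * c * D * (deriv f y) ^ 2 / (c * f y + d) ^ 3) x
      = D * deriv (deriv (deriv f)) x / (c * f x + d) ^ 2
        - 6 * c * D * deriv f x * deriv (deriv f) x / (c * f x + d) ^ 3
        + 6 * c ^ 2 * D * (deriv f x) ^ 3 / (c * f x + d) ^ 4 := by
  have hE' : HasDerivAt (fun y => c * f y + d) (c * deriv f x) x :=
    ((hf x).hasDerivAt.const_mul c).add_const d
  have hA : HasDerivAt (fun y => D * deriv (deriv f) y / (c * f y + d) ^ 2)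
      ((D * deriv (deriv (deriv f)) x * (c * f x + d) ^ 2
        - D * deriv (deriv f) x * (2 * (c * f x + d) ^ 1 * (c * deriv f x)))
        / ((c * f x + d) ^ 2) ^ 2) x := by
    exact ((hf3 x).hasDerivAt.const_mul D).div (by simpa using hE'.fun_pow 2)
      (pow_ne_zero _ (hE x))
  have hB : HasDerivAt (fun y => 2 * c * D * (deriv f y) ^ 2 / (c * f y + d) ^ 3)
      ((2 * c * D * (2 * (deriv f x) ^ 1 * deriv (deriv f) x) * (c * f x + d) ^ 3
        - 2 * c * D * (deriv f x) ^ 2 * (3 * (c * f x + d) ^ 2 * (c * deriv f x)))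
        / ((c * f x + d) ^ 3) ^ 2) x := by
    exact (((hf2 x).hasDerivAt.pow 2).const_mul (2 * c * D)).div
      (by simpa using hE'.fun_pow 3) (pow_ne_zero _ (hE x))
  rw [(hA.fun_sub hB).deriv]
  have := hE x
  field_simp
  ring

theorem stmt_15 (a b c d : ℝ) (hdet : a * d - b * c ≠ 0)
    (u : ℝ → ℝ → ℝ) (hu : ContDiff ℝ (⊤ : ℕ∞) (Function.uncurry u))
    (hux : ∀ t x, px u t x ≠ 0)
    (hden : ∀ t x, c * u t x + d ≠ 0)
    (heq : ∀ t x, pt u t x =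
      px (px (px u)) t x - (3 / 2) * (px u t x)⁻¹ * (px (px u) t x) ^ 2) :
    ∀ t x, pt (fun t x => (a * u t x + b) / (c * u t x + d)) t x =
      px (px (px (fun t x => (a * u t x + b) / (c * u t x + d)))) t x
      - (3 / 2) * (px (fun t x => (a * u t x + b) / (c * u t x + d)) t x)⁻¹
          * (px (px (fun t x => (a * u t x + b) / (c * u t x + d))) t x) ^ 2 := by
  intro t x
  set D := a * d - b * c with hD
  -- space slice
  set f : ℝ → ℝ := fun y => u t y with hfdef
  have hf : ContDiff ℝ ((⊤ : ℕ∞) : WithTop ℕ∞) f :=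
    (hu.of_le (by simp)).comp ((contDiff_const (c := t)).prodMk contDiff_id)
  have hf1 : Differentiable ℝ f := hf.differentiable (by simp)
  have hfd : ContDiff ℝ ((⊤ : ℕ∞) : WithTop ℕ∞) (deriv f) := (contDiff_infty_iff_deriv.mp hf).2
  have hf2 : Differentiable ℝ (deriv f) := hfd.differentiable (by simp)
  have hf3 : Differentiable ℝ (deriv (deriv f)) :=
    ((contDiff_infty_iff_deriv.mp hfd).2).differentiable (by simp)
  have hE : ∀ y, c * f y + d ≠ 0 := fun y => hden t y
  have hU1 : deriv f x ≠ 0 := hux t x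
  -- time slice
  set g : ℝ → ℝ := fun s => u s x with hgdef
  have hg : ContDiff ℝ ((⊤ : ℕ∞) : WithTop ℕ∞) g :=
    (hu.of_le (by simp)).comp (contDiff_id.prodMk (contDiff_const (c := x)))
  have hg1 : Differentiable ℝ g := hg.differentiable (by simp)
  -- first space derivative of v (as a function of y, time t fixed)
  have hP1 : (fun y => px (fun t x => (a * u t x + b) / (c * u t x + d)) t y)
      = fun y => D * deriv f y / (c * f y + d) ^ 2 := by
    funext y
    exact aux1 a b c d f hf1 hE y
  -- second space derivative
  have hP2 : (fun y => px (px (fun t x => (a * u t x + b) / (c * u t x + d))) t y)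
      = fun y => D * deriv (deriv f) y / (c * f y + d) ^ 2
          - 2 * c * D * (deriv f y) ^ 2 / (c * f y + d) ^ 3 := by
    funext y
    show deriv (fun z => px (fun t x => (a * u t x + b) / (c * u t x + d)) t z) y = _
    rw [hP1]
    exact aux2 c d D f hf1 hf2 hE y
  -- third space derivative at x
  have hP3 : px (px (px (fun t x => (a * u t x + b) / (c * u t x + d)))) t x
      = D * deriv (deriv (deriv f)) x / (c * f x + d) ^ 2
        - 6 * c * D * deriv f x * deriv (deriv f) x / (c * f x + d) ^ 3
        + 6 * c ^ 2 * D * (deriv f x) ^ 3 / (c * f x + d) ^ 4 := by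
    show deriv (fun z => px (px (fun t x => (a * u t x + b) / (c * u t x + d))) t z) x = _
    rw [hP2]
    exact aux3 c d D f hf1 hf2 hf3 hE x
  -- time derivative at (t,x)
  have hPT : pt (fun t x => (a * u t x + b) / (c * u t x + d)) t x
      = D * deriv g t / (c * g t + d) ^ 2 := by
    show deriv (fun s => (a * u s x + b) / (c * u s x + d)) t = _
    exact aux1 a b c d g hg1 (fun s => hden s x) t
  have hux1 : px (fun t x => (a * u t x + b) / (c * u t x + d)) t x
      = D * deriv f x / (c * f x + d) ^ 2 := congrFun hP1 x
  have hxx : px (px (fun t x => (a * u t x + b) / (c * u t x + d))) t x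
      = D * deriv (deriv f) x / (c * f x + d) ^ 2
        - 2 * c * D * (deriv f x) ^ 2 / (c * f x + d) ^ 3 := congrFun hP2 x
  -- rewrite the original equation in slice form
  have hueq : deriv g t = deriv (deriv (deriv f)) x
      - (3 / 2) * (deriv f x)⁻¹ * (deriv (deriv f) x) ^ 2 := heq t x
  have hgx : g t = f x := rfl
  rw [hPT, hP3, hux1, hxx, hueq, hgx]
  have hEx : c * f x + d ≠ 0 := hE x
  field_simp
  ring
end

section
/- Let ψ : ℝ × ℝ → ℝ be smooth with ψ(t,x) ≠ 0 for all (t,x), and suppose ψ satisfies the linear equation ψ_t = ψ_xxx at every point. Then the Cole–Hopf transform u(t,x) = ψ_x(t,x)/ψ(t,x) satisfies the Sharma–Tasso–Olver equation u_t = u_xxx + 3 u u_xx + 3 u_x² + 3 u² u_x at every point. -/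
section aux

variable {G : ℝ → ℝ → ℝ}

theorem sto_hasDerivAt_fst (hG : Differentiable ℝ (Function.uncurry G)) (t x : ℝ) :
    HasDerivAt (fun s => G s x) (fderiv ℝ (Function.uncurry G) (t, x) (1, 0)) t := by
  have h := (hG (t, x)).hasFDerivAt
  have hl : HasDerivAt (fun s : ℝ => (s, x)) ((1 : ℝ), (0 : ℝ)) t :=
    HasDerivAt.prodMk (hasDerivAt_id t) (hasDerivAt_const t x)
  exact h.comp_hasDerivAt t hl

theorem sto_hasDerivAt_snd (hG : Differentiable ℝ (Function.uncurry G)) (t x : ℝ) :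
    HasDerivAt (fun y => G t y) (fderiv ℝ (Function.uncurry G) (t, x) (0, 1)) x := by
  have h := (hG (t, x)).hasFDerivAt
  have hl : HasDerivAt (fun y : ℝ => (t, y)) ((0 : ℝ), (1 : ℝ)) x :=
    HasDerivAt.prodMk (hasDerivAt_const x t) (hasDerivAt_id x)
  exact h.comp_hasDerivAt x hl

theorem sto_pt_eq (hG : Differentiable ℝ (Function.uncurry G)) (t x : ℝ) :
    pt G t x = fderiv ℝ (Function.uncurry G) (t, x) (1, 0) :=
  (sto_hasDerivAt_fst hG t x).deriv

theorem sto_px_eq (hG : Differentiable ℝ (Function.uncurry G)) (t x : ℝ) :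
    px G t x = fderiv ℝ (Function.uncurry G) (t, x) (0, 1) :=
  (sto_hasDerivAt_snd hG t x).deriv

theorem sto_smooth_dir (hG : ContDiff ℝ (⊤ : ℕ∞) (Function.uncurry G)) (v : ℝ × ℝ) :
    ContDiff ℝ (⊤ : ℕ∞) (fun p : ℝ × ℝ => fderiv ℝ (Function.uncurry G) p v) :=
  (hG.fderiv_right (by simp)).clm_apply contDiff_const

theorem sto_smooth_px (hG : ContDiff ℝ (⊤ : ℕ∞) (Function.uncurry G)) :
    ContDiff ℝ (⊤ : ℕ∞) (Function.uncurry (px G)) := by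
  have : Function.uncurry (px G) = fun p : ℝ × ℝ => fderiv ℝ (Function.uncurry G) p (0, 1) := by
    funext p
    exact sto_px_eq (hG.differentiable (by simp)) p.1 p.2
  rw [this]
  exact sto_smooth_dir hG _

theorem sto_fderiv_dir (hG : ContDiff ℝ (⊤ : ℕ∞) (Function.uncurry G)) (v w : ℝ × ℝ) (q : ℝ × ℝ) :
    fderiv ℝ (fun p : ℝ × ℝ => fderiv ℝ (Function.uncurry G) p v) q w
      = fderiv ℝ (fderiv ℝ (Function.uncurry G)) q w v := by
  have hD : DifferentiableAt ℝ (fderiv ℝ (Function.uncurry G)) q :=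
    ((hG.fderiv_right (m := (⊤ : ℕ∞)) (by simp)).differentiable (by simp)) q
  have := ((ContinuousLinearMap.apply ℝ ℝ v).hasFDerivAt.comp q hD.hasFDerivAt).fderiv
  rw [show (fun p : ℝ × ℝ => fderiv ℝ (Function.uncurry G) p v)
      = (ContinuousLinearMap.apply ℝ ℝ v) ∘ (fderiv ℝ (Function.uncurry G)) from rfl, this]
  rfl

/-- Clairaut: mixed partials commute for smooth functions. -/
theorem sto_commute (hG : ContDiff ℝ (⊤ : ℕ∞) (Function.uncurry G)) (t x : ℝ) :
    pt (px G) t x = px (pt G) t x := by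
  have hpx : Function.uncurry (px G) = fun p : ℝ × ℝ => fderiv ℝ (Function.uncurry G) p (0, 1) := by
    funext p; exact sto_px_eq (hG.differentiable (by simp)) p.1 p.2
  have hpt : Function.uncurry (pt G) = fun p : ℝ × ℝ => fderiv ℝ (Function.uncurry G) p (1, 0) := by
    funext p; exact sto_pt_eq (hG.differentiable (by simp)) p.1 p.2
  have h1 : pt (px G) t x = fderiv ℝ (fderiv ℝ (Function.uncurry G)) (t, x) (1, 0) (0, 1) := by
    rw [sto_pt_eq (G := px G) (by rw [hpx]; exact (sto_smooth_dir hG _).differentiable (by simp)) t x,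
      hpx, sto_fderiv_dir hG]
  have h2 : px (pt G) t x = fderiv ℝ (fderiv ℝ (Function.uncurry G)) (t, x) (0, 1) (1, 0) := by
    rw [sto_px_eq (G := pt G) (by rw [hpt]; exact (sto_smooth_dir hG _).differentiable (by simp)) t x,
      hpt, sto_fderiv_dir hG]
  rw [h1, h2]
  exact (hG.contDiffAt.isSymmSndFDerivAt (by norm_num; exact WithTop.coe_le_coe.mpr le_top)) _ _

/-- Explicit first, second and third derivatives of `f'/f` for smooth nonvanishing `f`. -/
theorem sto_oneD {f : ℝ → ℝ} (hf : ContDiff ℝ (⊤ : ℕ∞) f) (h0 : ∀ y, f y ≠ 0) (x : ℝ) :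
    deriv (fun y => deriv f y / f y) x
        = (deriv (deriv f) x * f x - deriv f x ^ 2) / f x ^ 2 ∧
      deriv (deriv (fun y => deriv f y / f y)) x
        = (deriv (deriv (deriv f)) x * f x ^ 2
            - 3 * deriv f x * deriv (deriv f) x * f x + 2 * deriv f x ^ 3) / f x ^ 3 ∧
      deriv (deriv (deriv (fun y => deriv f y / f y))) x
        = (deriv (deriv (deriv (deriv f))) x * f x ^ 3
            - 4 * deriv f x * deriv (deriv (deriv f)) x * f x ^ 2
            - 3 * deriv (deriv f) x ^ 2 * f x ^ 2
            + 12 * deriv f x ^ 2 * deriv (deriv f) x * f x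
            - 6 * deriv f x ^ 4) / f x ^ 4 := by
  have hf1 : ContDiff ℝ (⊤ : ℕ∞) (deriv f) := (contDiff_infty_iff_deriv.mp hf).2
  have hf2 : ContDiff ℝ (⊤ : ℕ∞) (deriv (deriv f)) := (contDiff_infty_iff_deriv.mp hf1).2
  have hf3 : ContDiff ℝ (⊤ : ℕ∞) (deriv (deriv (deriv f))) := (contDiff_infty_iff_deriv.mp hf2).2
  have Hf : ∀ y, HasDerivAt f (deriv f y) y := fun y =>
    (hf.differentiable (by norm_num) y).hasDerivAt
  have Hf1 : ∀ y, HasDerivAt (deriv f) (deriv (deriv f) y) y := fun y =>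
    (hf1.differentiable (by norm_num) y).hasDerivAt
  have Hf2 : ∀ y, HasDerivAt (deriv (deriv f)) (deriv (deriv (deriv f)) y) y := fun y =>
    (hf2.differentiable (by norm_num) y).hasDerivAt
  have Hf3 : ∀ y, HasDerivAt (deriv (deriv (deriv f))) (deriv (deriv (deriv (deriv f))) y) y :=
    fun y => (hf3.differentiable (by norm_num) y).hasDerivAt
  have Hg : ∀ y, HasDerivAt (fun y => deriv f y / f y)
      ((deriv (deriv f) y * f y - deriv f y ^ 2) / f y ^ 2) y := by
    intro y
    have := (Hf1 y).div (Hf y) (h0 y)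
    refine this.congr_deriv ?_
    ring
  have hdg : deriv (fun y => deriv f y / f y)
      = fun y => (deriv (deriv f) y * f y - deriv f y ^ 2) / f y ^ 2 :=
    funext fun y => (Hg y).deriv
  have Hg1 : ∀ y, HasDerivAt (fun y => (deriv (deriv f) y * f y - deriv f y ^ 2) / f y ^ 2)
      ((deriv (deriv (deriv f)) y * f y ^ 2
          - 3 * deriv f y * deriv (deriv f) y * f y + 2 * deriv f y ^ 3) / f y ^ 3) y := by
    intro y
    have hnum : HasDerivAt (fun y => deriv (deriv f) y * f y - deriv f y ^ 2)
        (deriv (deriv (deriv f)) y * f y + deriv (deriv f) y * deriv f y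
          - 2 * deriv f y * deriv (deriv f) y) y := by
      have := ((Hf2 y).mul (Hf y)).sub (((Hf1 y).pow 2))
      refine this.congr_deriv ?_
      try push_cast
      try ring
    have hden : HasDerivAt (fun y => f y ^ 2) (2 * f y * deriv f y) y := by
      have := (Hf y).pow 2
      refine this.congr_deriv ?_
      try push_cast
      try ring
    have := hnum.div hden (pow_ne_zero 2 (h0 y))
    have h0y := h0 y
    refine this.congr_deriv ?_
    field_simp
    ring
  have hdg2 : deriv (deriv (fun y => deriv f y / f y))
      = fun y => (deriv (deriv (deriv f)) y * f y ^ 2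
          - 3 * deriv f y * deriv (deriv f) y * f y + 2 * deriv f y ^ 3) / f y ^ 3 := by
    rw [hdg]
    exact funext fun y => (Hg1 y).deriv
  have Hg2 : ∀ y, HasDerivAt (fun y => (deriv (deriv (deriv f)) y * f y ^ 2
          - 3 * deriv f y * deriv (deriv f) y * f y + 2 * deriv f y ^ 3) / f y ^ 3)
      ((deriv (deriv (deriv (deriv f))) y * f y ^ 3
          - 4 * deriv f y * deriv (deriv (deriv f)) y * f y ^ 2
          - 3 * deriv (deriv f) y ^ 2 * f y ^ 2
          + 12 * deriv f y ^ 2 * deriv (deriv f) y * f y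
          - 6 * deriv f y ^ 4) / f y ^ 4) y := by
    intro y
    have hsq : HasDerivAt (fun y => f y ^ 2) (2 * f y * deriv f y) y := by
      have := (Hf y).pow 2
      refine this.congr_deriv ?_
      try push_cast
      try ring
    have hnum : HasDerivAt (fun y => deriv (deriv (deriv f)) y * f y ^ 2
          - 3 * deriv f y * deriv (deriv f) y * f y + 2 * deriv f y ^ 3)
        ((deriv (deriv (deriv (deriv f))) y * f y ^ 2
            + deriv (deriv (deriv f)) y * (2 * f y * deriv f y))
          - ((3 * deriv (deriv f) y * deriv (deriv f) y
              + 3 * deriv f y * deriv (deriv (deriv f)) y) * f y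
            + 3 * deriv f y * deriv (deriv f) y * deriv f y)
          + 6 * deriv f y ^ 2 * deriv (deriv f) y) y := by
      have h1 := (Hf3 y).mul hsq
      have h2 := (((Hf1 y).const_mul (3:ℝ)).mul (Hf2 y)).mul (Hf y)
      have h3 := ((Hf1 y).pow 3).const_mul (2:ℝ)
      have := (h1.sub h2).add h3
      refine this.congr_deriv ?_
      simp only [Pi.mul_apply]
      try push_cast
      try ring
    have hden : HasDerivAt (fun y => f y ^ 3) (3 * f y ^ 2 * deriv f y) y := by
      have := (Hf y).pow 3
      refine this.congr_deriv ?_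
      try push_cast
      try ring
    have := hnum.div hden (pow_ne_zero 3 (h0 y))
    have h0y := h0 y
    refine this.congr_deriv ?_
    field_simp
    ring
  refine ⟨(Hg x).deriv, by rw [hdg2], ?_⟩
  rw [hdg2]
  exact (Hg2 x).deriv

end aux

/-- Whenever `ψ` solves the linear KdV equation `ψ_t = ψ_xxx`,
the Cole–Hopf transform `u = ψ_x/ψ` solves the Sharma–Tasso–Olver equation
`u_t = u_xxx + 3 u u_xx + 3 u_x² + 3 u² u_x`. -/
theorem stmt_17 (ψ : ℝ → ℝ → ℝ) (hψ : ContDiff ℝ (⊤ : ℕ∞) (Function.uncurry ψ))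
    (hψ0 : ∀ t x, ψ t x ≠ 0)
    (heq : ∀ t x, pt ψ t x = px (px (px ψ)) t x) :
    ∀ t x, pt (fun t x => px ψ t x / ψ t x) t x =
      px (px (px (fun t x => px ψ t x / ψ t x))) t x
      + 3 * (px ψ t x / ψ t x) * px (px (fun t x => px ψ t x / ψ t x)) t x
      + 3 * (px (fun t x => px ψ t x / ψ t x) t x) ^ 2
      + 3 * (px ψ t x / ψ t x) ^ 2 * px (fun t x => px ψ t x / ψ t x) t x := by
  intro t x
  set f : ℝ → ℝ := fun y => ψ t y with hfdef
  have hf : ContDiff ℝ (⊤ : ℕ∞) f :=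
    (hψ.comp (contDiff_const.prodMk contDiff_id)).of_le (by simp)
  have h0 : ∀ y, f y ≠ 0 := hψ0 t
  -- time derivative of u via quotient rule
  have hA : HasDerivAt (fun s => ψ s x) (pt ψ t x) t := by
    have h := sto_hasDerivAt_fst (hψ.differentiable (by simp)) t x
    rwa [← sto_pt_eq (hψ.differentiable (by simp)) t x] at h
  have hB : HasDerivAt (fun s => px ψ s x) (pt (px ψ) t x) t := by
    have hd := (sto_smooth_px hψ).differentiable (by simp)
    have h := sto_hasDerivAt_fst (G := px ψ) hd t x
    rwa [← sto_pt_eq (G := px ψ) hd t x] at h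
  have hLHS : pt (fun t x => px ψ t x / ψ t x) t x
      = (pt (px ψ) t x * ψ t x - px ψ t x * pt ψ t x) / ψ t x ^ 2 :=
    (hB.div hA (hψ0 t x)).deriv
  -- mixed partial: pt (px ψ) = px (pt ψ) = fourth space derivative
  have hco : pt (px ψ) t x = deriv (deriv (deriv (deriv f))) x := by
    rw [sto_commute hψ t x]
    show deriv (fun y => pt ψ t y) x = _
    have hfun : (fun y => pt ψ t y) = deriv (deriv (deriv f)) := by
      funext y
      exact heq t y
    rw [hfun]
  have hpt3 : pt ψ t x = deriv (deriv (deriv f)) x := heq t x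
  rw [hLHS, hco, hpt3]
  obtain ⟨o1, o2, o3⟩ := sto_oneD hf h0 x
  show (deriv (deriv (deriv (deriv f))) x * f x - deriv f x * deriv (deriv (deriv f)) x) / f x ^ 2
      = deriv (deriv (deriv (fun y => deriv f y / f y))) x
        + 3 * (deriv f x / f x) * deriv (deriv (fun y => deriv f y / f y)) x
        + 3 * (deriv (fun y => deriv f y / f y) x) ^ 2
        + 3 * (deriv f x / f x) ^ 2 * deriv (fun y => deriv f y / f y) x
  rw [o1, o2, o3]
  have h0x := h0 x
  field_simp
  ring
end

section
/- Let v : ℝ × ℝ → ℝ be smooth and satisfy the potential Sharma–Tasso–Olver equation v_t = v_xxx + 3 v_x v_xx + v_x³ at every point. Then ψ(t,x) = exp(v(t,x)) satisfies the linear equation ψ_t = ψ_xxx at every point. -/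
open scoped ContDiff


lemma exp_third_deriv (g : ℝ → ℝ) (hg : ContDiff ℝ ∞ g) (x : ℝ) :
    deriv (deriv (deriv (fun y => Real.exp (g y)))) x =
      Real.exp (g x) *
        (deriv (deriv (deriv g)) x + 3 * deriv g x * deriv (deriv g) x + (deriv g x) ^ 3) := by
  obtain ⟨hgd, hg'⟩ := contDiff_infty_iff_deriv.mp hg
  obtain ⟨hg'd, hg''⟩ := contDiff_infty_iff_deriv.mp hg'
  obtain ⟨hg''d, hg'''⟩ := contDiff_infty_iff_deriv.mp hg''
  have h1 : deriv (fun y => Real.exp (g y)) = fun y => Real.exp (g y) * deriv g y :=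
    funext fun y => _root_.deriv_exp (hgd y)
  have h2 : deriv (deriv (fun y => Real.exp (g y)))
      = fun y => Real.exp (g y) * ((deriv g y) ^ 2 + deriv (deriv g) y) := by
    rw [h1]
    funext y
    rw [deriv_fun_mul ((hgd y).exp) (hg'd y), _root_.deriv_exp (hgd y)]
    ring
  rw [h2]
  have hsq : DifferentiableAt ℝ (fun y => (deriv g y) ^ 2 + deriv (deriv g) y) x :=
    (((hg'd x).pow 2).add (hg''d x))
  rw [deriv_fun_mul ((hgd x).exp) hsq, _root_.deriv_exp (hgd x),
    deriv_fun_add (f := fun y => deriv g y ^ 2) ((hg'd x).pow 2) (hg''d x), deriv_fun_pow (hg'd x) 2]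
  ring

/-- The potential Sharma–Tasso–Olver equation
`v_t = v_xxx + 3 v_x v_xx + v_x³` is linearized to `ψ_t = ψ_xxx` by `ψ = exp v`. -/
theorem stmt_18 (v : ℝ → ℝ → ℝ) (hv : ContDiff ℝ (⊤ : ℕ∞) (Function.uncurry v))
    (heq : ∀ t x, pt v t x =
      px (px (px v)) t x + 3 * px v t x * px (px v) t x + (px v t x) ^ 3) :
    ∀ t x, pt (fun t x => Real.exp (v t x)) t x =
      px (px (px (fun t x => Real.exp (v t x)))) t x := by
  intro t x
  have hv' : ContDiff ℝ ∞ (Function.uncurry v) := hv.of_le (by simp)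
  have hg : ContDiff ℝ ∞ (fun y => v t y) :=
    hv'.comp ((contDiff_const (c := t)).prodMk contDiff_id)
  have hs : ContDiff ℝ ∞ (fun s => v s x) :=
    hv'.comp (contDiff_id.prodMk (contDiff_const (c := x)))
  have hsd : DifferentiableAt ℝ (fun s => v s x) t :=
    (hs.differentiable (by simp)).differentiableAt
  have hpt : pt (fun t x => Real.exp (v t x)) t x
      = Real.exp (v t x) * pt v t x := by
    simp only [pt]
    rw [_root_.deriv_exp hsd]
  have hpx : px (px (px (fun t x => Real.exp (v t x)))) t x
      = deriv (deriv (deriv (fun y => Real.exp (v t y)))) x := rfl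
  rw [hpt, hpx, exp_third_deriv _ hg, heq t x]
  rfl
end
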